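/- arXiv:1311.0377 — 10 statements merged into one kernel-verified Lean document; each statement's English description precedes it below -/
import Mathlib

section
/- Let λ be a nonzero complex number and let x ∈ ℂ^m, y ∈ ℂ^k. Then C·(x,y) = λ·(x,y) if and only if ((λ+1)/(2λ))·x = −D·y and ((λ+1)/2)·y = −F·x. -/
/-!
Since `w₁` is an involution, `w₁ w₂ z = λ z` is equivalent to `w₂ z = λ w₁ z`. Both sides are
computed blockwise: `w₂ (x, y) = (x, -2Fx - y)` and `w₁ (x, y) = (-x - 2Dy, y)`, so the eigenvector
equation splits into `x = λ(-x - 2Dy)` and `-2Fx - y = λ y`, which are the two stated equations.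
-/

open Matrix

theorem Matrix.mul_mulVec_eq_smul_iff_of_mul_self_eq_one {n R : Type*} [Fintype n]
    [DecidableEq n] [CommSemiring R] {A B : Matrix n n R} (hA : A * A = 1) (c : R) (v : n → R) :
    (A * B) *ᵥ v = c • v ↔ B *ᵥ v = c • (A *ᵥ v) := by
  have hinv : Function.Involutive (A *ᵥ ·) := fun w => by
    simp only [mulVec_mulVec, hA, one_mulVec]
  rw [← mulVec_mulVec, hinv.eq_iff, mulVec_smul]

theorem Sum.smul_elim {α β M R : Type*} [SMul R M] (c : R) (f : α → M) (g : β → M) :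
    c • Sum.elim f g = Sum.elim (c • f) (c • g) := by
  ext (_ | _) <;> rfl

theorem Matrix.fromBlocks_neg_one_one_mul_self {m k R : Type*} [Fintype m] [Fintype k]
    [DecidableEq m] [DecidableEq k] [Ring R] (B : Matrix m k R) :
    fromBlocks (-1 : Matrix m m R) B 0 (1 : Matrix k k R) *
      fromBlocks (-1 : Matrix m m R) B 0 (1 : Matrix k k R) = 1 := by
  rw [fromBlocks_multiply, ← fromBlocks_one]
  simp

section Scalar

variable {ι K : Type*} [Field K] [NeZero (2 : K)]

theorem eq_smul_neg_add_iff {lam : K} (hlam : lam ≠ 0) (u v : ι → K) :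
    u = lam • (-u + (-2 : K) • v) ↔ ((lam + 1) / (2 * lam)) • u = -v := by
  simp only [funext_iff, Pi.smul_apply, Pi.add_apply, Pi.neg_apply, smul_eq_mul]
  refine forall_congr' fun i => ?_
  have h2 : (2 : K) ≠ 0 := two_ne_zero
  field_simp
  constructor <;> intro h <;> linear_combination h

theorem neg_two_smul_add_neg_eq_smul_iff (lam : K) (u v : ι → K) :
    (-2 : K) • u + -v = lam • v ↔ ((lam + 1) / 2) • v = -u := by
  simp only [funext_iff, Pi.smul_apply, Pi.add_apply, Pi.neg_apply, smul_eq_mul]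
  refine forall_congr' fun i => ?_
  have h2 : (2 : K) ≠ 0 := two_ne_zero
  field_simp
  constructor <;> intro h <;> linear_combination -h

end Scalar

theorem stmt_0_general (m k : ℕ)
    (D : Matrix (Fin m) (Fin k) ℂ) (F : Matrix (Fin k) (Fin m) ℂ)
    (C : Matrix (Fin m ⊕ Fin k) (Fin m ⊕ Fin k) ℂ)
    (hC : C = fromBlocks (-1) ((-2 : ℂ) • D) 0 1 * fromBlocks 1 0 ((-2 : ℂ) • F) (-1))
    (lam : ℂ) (hlam : lam ≠ 0) (x : Fin m → ℂ) (y : Fin k → ℂ) :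
    C *ᵥ Sum.elim x y = lam • Sum.elim x y ↔
      ((lam + 1) / (2 * lam)) • x = -(D *ᵥ y) ∧ ((lam + 1) / 2) • y = -(F *ᵥ x) := by
  subst hC
  rw [mul_mulVec_eq_smul_iff_of_mul_self_eq_one (fromBlocks_neg_one_one_mul_self ((-2 : ℂ) • D)),
    fromBlocks_mulVec, fromBlocks_mulVec, Sum.smul_elim, Sum.elim_eq_iff]
  simp only [one_mulVec, zero_mulVec, neg_mulVec, smul_mulVec, add_zero, zero_add,
    Sum.elim_comp_inl, Sum.elim_comp_inr]
  exact and_congr (eq_smul_neg_add_iff hlam x (D *ᵥ y)) (neg_two_smul_add_neg_eq_smul_iff lam _ _)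

/-- For a nonzero complex number `lam` and vectors `x ∈ ℂ^m`, `y ∈ ℂ^k`,
`C·(x,y) = lam·(x,y)` iff `((lam+1)/(2lam))·x = −D·y` and `((lam+1)/2)·y = −F·x`,
where `C = w₁·w₂` is the Coxeter transformation. -/
theorem stmt_0 (m k : ℕ) (hm : 0 < m) (hk : 0 < k)
    (D : Matrix (Fin m) (Fin k) ℂ) (F : Matrix (Fin k) (Fin m) ℂ)
    (C : Matrix (Fin m ⊕ Fin k) (Fin m ⊕ Fin k) ℂ)
    (hC : C = fromBlocks (-1) ((-2 : ℂ) • D) 0 1 * fromBlocks 1 0 ((-2 : ℂ) • F) (-1))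
    (lam : ℂ) (hlam : lam ≠ 0) (x : Fin m → ℂ) (y : Fin k → ℂ) :
    C *ᵥ Sum.elim x y = lam • Sum.elim x y ↔
      ((lam + 1) / (2 * lam)) • x = -(D *ᵥ y) ∧ ((lam + 1) / 2) • y = -(F *ᵥ x) :=
  stmt_0_general m k D F C hC lam hlam x y
end

section
/- Let λ be a nonzero complex number and suppose C·(x,y) = λ·(x,y) for some x ∈ ℂ^m, y ∈ ℂ^k. Then (D·F)·x = ((λ+1)²/(4λ))·x and (F·D)·y = ((λ+1)²/(4λ))·y. -/
/-!
Writing `C (x, y) = λ (x, y)` blockwise gives `4 D F x + 2 D y = (λ + 1) x` and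
`-2 F x = (λ + 1) y`. Multiplying the first equation by `λ + 1` and substituting the second
(pushed through `D`) eliminates `y` and leaves `4 λ D F x = (λ + 1)² x`; symmetrically, pushing the
first equation through `F` and eliminating `F x` leaves `4 λ F D y = (λ + 1)² y`.
-/

open Matrix

variable {m n R : Type*} [Fintype m] [Fintype n] [CommRing R]

theorem four_mul_smul_mulVec_mulVec_of_coxeter_eigen (D : Matrix m n R) (F : Matrix n m R)
    {lam : R} {x : m → R} {y : n → R}
    (hx : (4 : R) • D *ᵥ F *ᵥ x + (2 : R) • D *ᵥ y = (lam + 1) • x)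
    (hy : (-2 : R) • F *ᵥ x = (lam + 1) • y) :
    (4 * lam) • D *ᵥ F *ᵥ x = (lam + 1) ^ 2 • x ∧
      (4 * lam) • F *ᵥ D *ᵥ y = (lam + 1) ^ 2 • y := by
  have hy_D : (-2 : R) • D *ᵥ F *ᵥ x = (lam + 1) • D *ᵥ y := by
    simpa only [mulVec_smul] using congrArg (D *ᵥ ·) hy
  have hx_F : (4 : R) • F *ᵥ D *ᵥ F *ᵥ x + (2 : R) • F *ᵥ D *ᵥ y = (lam + 1) • F *ᵥ x := by
    simpa only [mulVec_add, mulVec_smul] using congrArg (F *ᵥ ·) hx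
  have hy_FD : (-2 : R) • F *ᵥ D *ᵥ F *ᵥ x = (lam + 1) • F *ᵥ D *ᵥ y := by
    simpa only [mulVec_smul] using congrArg (F *ᵥ D *ᵥ ·) hy
  constructor
  · linear_combination (norm := module) (lam + 1) • hx + (2 : R) • hy_D
  · linear_combination (norm := module) (-2 : R) • hx_F + (lam + 1) • hy - (4 : R) • hy_FD

variable [DecidableEq m] [DecidableEq n]

def coxeter (D : Matrix m n R) (F : Matrix n m R) : Matrix (m ⊕ n) (m ⊕ n) R :=
  fromBlocks (-1) ((-2 : R) • D) 0 1 * fromBlocks 1 0 ((-2 : R) • F) (-1)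

theorem coxeter_eq_fromBlocks (D : Matrix m n R) (F : Matrix n m R) :
    coxeter D F = fromBlocks ((4 : R) • (D * F) - 1) ((2 : R) • D) ((-2 : R) • F) (-1) := by
  rw [coxeter, fromBlocks_multiply]
  congr 1 <;> simp only [Matrix.mul_one, Matrix.one_mul, Matrix.mul_zero, Matrix.mul_neg,
    Matrix.smul_mul, Matrix.mul_smul, smul_smul] <;> module

theorem coxeter_mulVec_eq_smul_iff (D : Matrix m n R) (F : Matrix n m R) (lam : R)
    (x : m → R) (y : n → R) :
    coxeter D F *ᵥ Sum.elim x y = lam • Sum.elim x y ↔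
      (4 : R) • D *ᵥ F *ᵥ x + (2 : R) • D *ᵥ y = (lam + 1) • x ∧
      (-2 : R) • F *ᵥ x = (lam + 1) • y := by
  have hsmul : lam • Sum.elim x y = Sum.elim (lam • x) (lam • y) := Sum.comp_elim _ _ _
  rw [coxeter_eq_fromBlocks, fromBlocks_mulVec, hsmul, Sum.elim_comp_inl, Sum.elim_comp_inr,
    Sum.elim_eq_iff, sub_mulVec, one_mulVec, neg_mulVec, one_mulVec, smul_mulVec, smul_mulVec,
    smul_mulVec, ← mulVec_mulVec]
  constructor <;> rintro ⟨h₁, h₂⟩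
  · exact ⟨by linear_combination (norm := module) h₁, by linear_combination (norm := module) h₂⟩
  · exact ⟨by linear_combination (norm := module) h₁, by linear_combination (norm := module) h₂⟩

theorem stmt_1_general (m k : ℕ)
    (D : Matrix (Fin m) (Fin k) ℂ) (F : Matrix (Fin k) (Fin m) ℂ)
    (C : Matrix (Fin m ⊕ Fin k) (Fin m ⊕ Fin k) ℂ)
    (hC : C = fromBlocks (-1) ((-2 : ℂ) • D) 0 1 * fromBlocks 1 0 ((-2 : ℂ) • F) (-1))
    (lam : ℂ) (hlam : lam ≠ 0) (x : Fin m → ℂ) (y : Fin k → ℂ)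
    (heig : C *ᵥ Sum.elim x y = lam • Sum.elim x y) :
    (D * F) *ᵥ x = ((lam + 1) ^ 2 / (4 * lam)) • x ∧
    (F * D) *ᵥ y = ((lam + 1) ^ 2 / (4 * lam)) • y := by
  subst hC
  obtain ⟨hx, hy⟩ := (coxeter_mulVec_eq_smul_iff D F lam x y).1 heig
  obtain ⟨hDF, hFD⟩ := four_mul_smul_mulVec_mulVec_of_coxeter_eigen D F hx hy
  have h4 : 4 * lam ≠ 0 := mul_ne_zero (by norm_num) hlam
  constructor <;> rw [← mulVec_mulVec, div_eq_inv_mul, mul_smul, eq_inv_smul_iff₀ h4]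
  exacts [hDF, hFD]

/-- If `C·(x,y) = lam·(x,y)` with `lam ≠ 0`, then
`(DF)·x = ((lam+1)²/(4lam))·x` and `(FD)·y = ((lam+1)²/(4lam))·y`. -/
theorem stmt_1 (m k : ℕ) (hm : 0 < m) (hk : 0 < k)
    (D : Matrix (Fin m) (Fin k) ℂ) (F : Matrix (Fin k) (Fin m) ℂ)
    (C : Matrix (Fin m ⊕ Fin k) (Fin m ⊕ Fin k) ℂ)
    (hC : C = fromBlocks (-1) ((-2 : ℂ) • D) 0 1 * fromBlocks 1 0 ((-2 : ℂ) • F) (-1))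
    (lam : ℂ) (hlam : lam ≠ 0) (x : Fin m → ℂ) (y : Fin k → ℂ)
    (heig : C *ᵥ Sum.elim x y = lam • Sum.elim x y) :
    (D * F) *ᵥ x = ((lam + 1) ^ 2 / (4 * lam)) • x ∧
    (F * D) *ᵥ y = ((lam + 1) ^ 2 / (4 * lam)) • y :=
  stmt_1_general m k D F C hC lam hlam x y heig
end

section
/- Let K be the (m+k)×(m+k) block matrix [[2I, 2D],[2F, 2I]]. For every vector z ∈ ℝ^(m+k), one has K·z = 0 if and only if C·z = z; that is, the kernel of the Cartan matrix K coincides with the space of fixed points of the Coxeter transformation C. -/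
/-!
Write `C = w₁ w₂` with `w₁ = [[-I, -2D], [0, I]]` and `w₂ = [[I, 0], [-2F, -I]]`. Both are
involutions, so `C z = z` iff `w₂ z = w₁ z`, i.e. `(w₂ - w₁) z = 0`. Moreover
`w₂ - w₁ = J K` with `J = [[I, 0], [0, -I]]`, again an involution, so this happens iff `K z = 0`.
-/

open Matrix

namespace Matrix

variable {m n R : Type*} [Fintype m] [Fintype n] [DecidableEq m] [DecidableEq n]

theorem mulVec_eq_iff_eq_mulVec_of_mul_self_eq_one [Semiring R] {w : Matrix n n R}
    (hw : w * w = 1) {u v : n → R} : w *ᵥ u = v ↔ u = w *ᵥ v := by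
  constructor <;> rintro rfl <;> rw [mulVec_mulVec, hw, one_mulVec]

theorem mulVec_eq_zero_iff_of_mul_self_eq_one [Semiring R] {w : Matrix n n R}
    (hw : w * w = 1) {v : n → R} : w *ᵥ v = 0 ↔ v = 0 := by
  rw [mulVec_eq_iff_eq_mulVec_of_mul_self_eq_one hw, mulVec_zero]

theorem fromBlocks_neg_one_one_mul_self_s2 [Ring R] (B : Matrix m n R) :
    fromBlocks (-1 : Matrix m m R) B 0 (1 : Matrix n n R) *
      fromBlocks (-1 : Matrix m m R) B 0 (1 : Matrix n n R) = 1 := by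
  simp [fromBlocks_multiply, ← fromBlocks_one]

theorem fromBlocks_one_neg_one_mul_self [Ring R] (C : Matrix n m R) :
    fromBlocks (1 : Matrix m m R) 0 C (-1 : Matrix n n R) *
      fromBlocks (1 : Matrix m m R) 0 C (-1 : Matrix n n R) = 1 := by
  simp [fromBlocks_multiply, ← fromBlocks_one]

theorem fromBlocks_one_neg_one_sub_fromBlocks_neg_one_one [CommRing R] (D : Matrix m n R) (F : Matrix n m R) :
    fromBlocks 1 0 ((-2 : R) • F) (-1) - fromBlocks (-1) ((-2 : R) • D) 0 1 =
      fromBlocks 1 0 0 (-1) *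
        fromBlocks ((2 : R) • 1) ((2 : R) • D) ((2 : R) • F) ((2 : R) • 1) := by
  rw [sub_eq_add_neg, fromBlocks_neg, fromBlocks_add, fromBlocks_multiply]
  congr 1 <;> simp only [Matrix.one_mul, Matrix.zero_mul, Matrix.neg_mul, add_zero, zero_add] <;>
    module

end Matrix

theorem stmt_2_general (m k : ℕ)
    (D : Matrix (Fin m) (Fin k) ℝ) (F : Matrix (Fin k) (Fin m) ℝ)
    (C : Matrix (Fin m ⊕ Fin k) (Fin m ⊕ Fin k) ℝ)
    (hC : C = fromBlocks (-1) ((-2 : ℝ) • D) 0 1 * fromBlocks 1 0 ((-2 : ℝ) • F) (-1))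
    (K : Matrix (Fin m ⊕ Fin k) (Fin m ⊕ Fin k) ℝ)
    (hK : K = fromBlocks ((2 : ℝ) • 1) ((2 : ℝ) • D) ((2 : ℝ) • F) ((2 : ℝ) • 1)) :
    ∀ z : Fin m ⊕ Fin k → ℝ, K *ᵥ z = 0 ↔ C *ᵥ z = z := by
  intro z
  subst hC hK
  rw [← mulVec_mulVec,
    mulVec_eq_iff_eq_mulVec_of_mul_self_eq_one (fromBlocks_neg_one_one_mul_self_s2 _),
    ← sub_eq_zero (b := fromBlocks (-1) _ 0 1 *ᵥ z), ← sub_mulVec,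
    fromBlocks_one_neg_one_sub_fromBlocks_neg_one_one, ← mulVec_mulVec,
    mulVec_eq_zero_iff_of_mul_self_eq_one (fromBlocks_one_neg_one_mul_self 0)]

/-- The kernel of the Cartan matrix `K = [[2I,2D],[2F,2I]]` coincides with
the space of fixed points of the Coxeter transformation `C = w₁·w₂`:
for every `z`, `K·z = 0 ↔ C·z = z`. -/
theorem stmt_2 (m k : ℕ) (hm : 0 < m) (hk : 0 < k)
    (D : Matrix (Fin m) (Fin k) ℝ) (F : Matrix (Fin k) (Fin m) ℝ)
    (C : Matrix (Fin m ⊕ Fin k) (Fin m ⊕ Fin k) ℝ)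
    (hC : C = fromBlocks (-1) ((-2 : ℝ) • D) 0 1 * fromBlocks 1 0 ((-2 : ℝ) • F) (-1))
    (K : Matrix (Fin m ⊕ Fin k) (Fin m ⊕ Fin k) ℝ)
    (hK : K = fromBlocks ((2 : ℝ) • 1) ((2 : ℝ) • D) ((2 : ℝ) • F) ((2 : ℝ) • 1)) :
    ∀ z : Fin m ⊕ Fin k → ℝ, K *ᵥ z = 0 ↔ C *ᵥ z = z :=
  stmt_2_general m k D F C hC K hK
end

section
/- Let U₁ be an m×m real diagonal matrix and U₂ a k×k real diagonal matrix, both with strictly positive diagonal entries, let A be an m×k real matrix, and set D := U₁·A and F := U₂·Aᵀ. Then every complex eigenvalue of the m×m matrix D·F (every complex root of its characteristic polynomial) is a nonnegative real number. -/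
/-!
`D * F = U₁ * (A * U₂ * Aᵀ)` is the product of a positive definite and a positive semidefinite
matrix. If `P * Q` has the eigenvector `v` for the eigenvalue `z`, then `Q v = z • P⁻¹ v`, so
`z = (v* Q v) / (v* P⁻¹ v)` is the quotient of a nonnegative and a positive real number.
-/

open Matrix ComplexOrder

namespace Matrix

variable {n : Type*} [Fintype n] [DecidableEq n]

theorem exists_mulVec_eq_smul_of_isRoot_charpoly {K : Type*} [Field K] {M : Matrix n n K} {z : K}
    (hz : M.charpoly.IsRoot z) : ∃ v ≠ 0, M *ᵥ v = z • v := by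
  rw [← charpoly_toLin', ← Module.End.hasEigenvalue_iff_isRoot_charpoly] at hz
  obtain ⟨v, hv⟩ := hz.exists_hasEigenvector
  exact ⟨v, hv.2, by simpa using hv.apply_eq_smul⟩

theorem PosDef.nonneg_of_isRoot_charpoly_mul {𝕜 : Type*} [RCLike 𝕜] {P Q : Matrix n n 𝕜}
    (hP : P.PosDef) (hQ : Q.PosSemidef) {z : 𝕜} (hz : (P * Q).charpoly.IsRoot z) : 0 ≤ z := by
  obtain ⟨v, hv, hPQv⟩ := exists_mulVec_eq_smul_of_isRoot_charpoly hz
  have hQv : Q *ᵥ v = z • (P⁻¹ *ᵥ v) := by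
    rw [← mulVec_smul, ← hPQv, mulVec_mulVec, ← Matrix.mul_assoc,
      nonsing_inv_mul P ((isUnit_iff_isUnit_det P).mp hP.isUnit), Matrix.one_mul]
  have hpos : 0 < star v ⬝ᵥ (P⁻¹ *ᵥ v) := hP.inv.dotProduct_mulVec_pos hv
  have hz_eq : z = star v ⬝ᵥ (Q *ᵥ v) / star v ⬝ᵥ (P⁻¹ *ᵥ v) := by
    rw [hQv, dotProduct_smul, smul_eq_mul, mul_div_cancel_right₀ _ hpos.ne']
  exact hz_eq ▸ div_nonneg (hQ.dotProduct_mulVec_nonneg v) hpos.le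

end Matrix

theorem stmt_4_general (m k : ℕ)
    (U₁ : Matrix (Fin m) (Fin m) ℝ) (U₂ : Matrix (Fin k) (Fin k) ℝ)
    (hU₁ : U₁.IsDiag) (hU₂ : U₂.IsDiag)
    (hU₁pos : ∀ i, 0 < U₁ i i) (hU₂pos : ∀ i, 0 < U₂ i i)
    (A : Matrix (Fin m) (Fin k) ℝ)
    (D : Matrix (Fin m) (Fin k) ℝ) (hD : D = U₁ * A)
    (F : Matrix (Fin k) (Fin m) ℝ) (hF : F = U₂ * Aᵀ)
    (z : ℂ) (hz : (((D * F)).map Complex.ofReal).charpoly.IsRoot z) :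
    ∃ r : ℝ, 0 ≤ r ∧ z = (r : ℂ) := by
  set A' := A.map Complex.ofReal
  have hP : (diagonal fun i => (U₁ i i : ℂ)).PosDef :=
    posDef_diagonal_iff.mpr fun i => Complex.zero_lt_real.mpr (hU₁pos i)
  have hQ : (A' * diagonal (fun l => (U₂ l l : ℂ)) * A'ᴴ).PosSemidef :=
    PosSemidef.mul_mul_conjTranspose_same
      (PosSemidef.diagonal fun l => Complex.zero_le_real.mpr (hU₂pos l).le) A'
  have hDF : (D * F).map Complex.ofReal =
      diagonal (fun i => (U₁ i i : ℂ)) * (A' * diagonal (fun l => (U₂ l l : ℂ)) * A'ᴴ) := by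
    conv_lhs => rw [hD, hF, ← hU₁.diagonal_diag, ← hU₂.diagonal_diag,
      show Complex.ofReal = ⇑Complex.ofRealHom from rfl]
    simp only [Matrix.map_mul, Matrix.mul_assoc, diagonal_map (map_zero _), diag_apply, A',
      conjTranspose, transpose_map, map_map, Function.comp_def, RCLike.star_def, Complex.conj_ofReal]
    rfl
  obtain ⟨r, hr, hrz⟩ := RCLike.nonneg_iff_exists_ofReal.mp
    (hP.nonneg_of_isRoot_charpoly_mul hQ (hDF ▸ hz))
  exact ⟨r, hr, hrz.symm⟩

/-- If `U₁`, `U₂` are real diagonal matrices with strictly positive diagonal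
entries, `A` is an m×k real matrix, `D = U₁·A` and `F = U₂·Aᵀ`, then every complex root of
the characteristic polynomial of `D·F` is a nonnegative real number. -/
theorem stmt_4 (m k : ℕ) (hm : 0 < m) (hk : 0 < k)
    (U₁ : Matrix (Fin m) (Fin m) ℝ) (U₂ : Matrix (Fin k) (Fin k) ℝ)
    (hU₁ : U₁.IsDiag) (hU₂ : U₂.IsDiag)
    (hU₁pos : ∀ i, 0 < U₁ i i) (hU₂pos : ∀ i, 0 < U₂ i i)
    (A : Matrix (Fin m) (Fin k) ℝ)
    (D : Matrix (Fin m) (Fin k) ℝ) (hD : D = U₁ * A)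
    (F : Matrix (Fin k) (Fin m) ℝ) (hF : F = U₂ * Aᵀ)
    (z : ℂ) (hz : (((D * F)).map Complex.ofReal).charpoly.IsRoot z) :
    ∃ r : ℝ, 0 ≤ r ∧ z = (r : ℂ) :=
  stmt_4_general m k U₁ U₂ hU₁ hU₂ hU₁pos hU₂pos A D hD F hF z hz
end

section
/- Suppose that the matrix 2D has integer entries and that the symmetric matrix B = [[I, D],[Dᵀ, I]] is positive semidefinite. Then every complex eigenvalue of the Coxeter transformation C (every complex root of its characteristic polynomial) is a root of unity. This is the statement that the eigenvalues of an affine Coxeter transformation are roots of unity. -/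
/-!
With `A = 2D`, an eigenvector `(x, y)` of `C` for the eigenvalue `z` satisfies
`(z + 1) y = -Aᵀ x` and `(z + 1)² x = z A Aᵀ x`. Pairing with `x` gives
`(z + 1)² ‖x‖² = 4 z ‖Dᵀ x‖²`, and testing `B ≥ 0` on `(x, -Dᵀ x)` gives `‖Dᵀ x‖ ≤ ‖x‖`. So either
`x = 0` and `z = -1`, or `z` is a root of `z² + (2 - 4t) z + 1` with `t ∈ [0, 1]`; either way
`|z| = 1`. As `2D` is integral, the characteristic polynomial of `C` is a monic integer polynomial
all of whose roots have modulus one, and Kronecker's theorem makes them roots of unity.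
-/

open Matrix Polynomial
open scoped ComplexOrder

theorem Complex.norm_eq_one_of_add_one_sq_mul_eq {z a b : ℂ} (ha : 0 ≤ a) (hab : a ≤ b)
    (hb : 0 < b) (h : (z + 1) ^ 2 * b = 4 * z * a) : ‖z‖ = 1 := by
  lift a to ℝ using (nonneg_iff.1 ha).2.symm
  lift b to ℝ using (nonneg_iff.1 hb.le).2.symm
  rw [zero_le_real] at ha
  rw [real_le_real] at hab
  rw [zero_lt_real] at hb
  obtain ⟨p, q⟩ := z
  have hre : ((p + 1) ^ 2 - q ^ 2) * b = 4 * p * a := by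
    simpa [sq, mul_re] using congrArg re h
  have him : 2 * (p + 1) * q * b = 4 * q * a := by
    have := congrArg im h
    simp only [sq, mul_im, mul_re, add_re, one_re, add_im, one_im, add_zero, ofReal_im, mul_zero,
      ofReal_re, zero_add, re_ofNat, im_ofNat, zero_mul, sub_zero] at this
    linear_combination this
  suffices p ^ 2 + q ^ 2 = 1 by
    rw [norm_def, normSq_mk, ← sq, ← sq, this, Real.sqrt_one]
  rcases eq_or_ne q 0 with rfl | hq
  · rcases le_or_gt 0 p with hp | hp
    · have : (p - 1) ^ 2 * b ≤ 0 := by nlinarith [mul_le_mul_of_nonneg_left hab hp]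
      have : (p - 1) ^ 2 = 0 := le_antisymm (nonpos_of_mul_nonpos_left this hb) (sq_nonneg _)
      nlinarith
    · have : (p + 1) ^ 2 * b ≤ 0 := by nlinarith [mul_nonpos_of_nonpos_of_nonneg hp.le ha]
      have : (p + 1) ^ 2 = 0 := le_antisymm (nonpos_of_mul_nonpos_left this hb) (sq_nonneg _)
      nlinarith
  · have : 2 * a = (p + 1) * b := mul_left_cancel₀ hq (by linarith)
    nlinarith

theorem Polynomial.exists_pow_eq_one_of_forall_aeval_eq_zero_norm_eq_one {p : ℤ[X]}
    (hp : p.Monic) (hroots : ∀ z : ℂ, aeval z p = 0 → ‖z‖ = 1) {μ : ℂ} (hμ : aeval μ p = 0) :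
    ∃ n, 0 < n ∧ μ ^ n = 1 := by
  have hμint : IsIntegral ℤ μ := ⟨p, hp, by rwa [← aeval_def]⟩
  let K := IntermediateField.adjoin ℚ {μ}
  have : FiniteDimensional ℚ K := IntermediateField.adjoin.finiteDimensional hμint.tower_top
  have : NumberField K := ⟨⟩
  let x : K := IntermediateField.AdjoinSimple.gen ℚ μ
  have hx : algebraMap K ℂ x = μ := IntermediateField.AdjoinSimple.algebraMap_gen ℚ μ
  have hinj : Function.Injective (algebraMap K ℂ) := (algebraMap K ℂ).injective
  have hpx : aeval x p = 0 := hinj <| by rwa [map_zero, ← aeval_algebraMap_apply, hx]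
  obtain ⟨n, hn, hxn⟩ := NumberField.Embeddings.pow_eq_one_of_norm_eq_one K ℂ
    (by rwa [← isIntegral_algebraMap_iff hinj, hx]) fun φ =>
      hroots _ (by rw [show φ x = φ.toIntAlgHom x from rfl, aeval_algHom_apply, hpx, map_zero])
  exact ⟨n, hn, by rw [← hx, ← map_pow, hxn, map_one]⟩

namespace Matrix

variable {m n : Type*}

lemma conjTranspose_map_ofReal (M : Matrix m n ℝ) :
    (M.map Complex.ofReal)ᴴ = (M.map Complex.ofReal)ᵀ := by
  rw [← conjTranspose_map _ fun a => (Complex.conj_ofReal a).symm,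
    conjTranspose_eq_transpose_of_trivial, transpose_map]

variable [Fintype m] [Fintype n]

lemma star_dotProduct_mulVec_conjTranspose_mulVec {R : Type*} [CommRing R] [StarRing R]
    (M : Matrix m n R) (x : m → R) :
    star x ⬝ᵥ (M *ᵥ (Mᴴ *ᵥ x)) = star (Mᴴ *ᵥ x) ⬝ᵥ (Mᴴ *ᵥ x) := by
  rw [dotProduct_mulVec, star_mulVec, conjTranspose_conjTranspose]

variable [DecidableEq m] [DecidableEq n]

open scoped MatrixOrder in
lemma PosSemidef.map_ofReal {M : Matrix n n ℝ} (hM : M.PosSemidef) :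
    (M.map Complex.ofReal).PosSemidef := by
  obtain ⟨A, rfl⟩ := CStarAlgebra.nonneg_iff_eq_star_mul_self.mp hM.nonneg
  have hA : (star A).map Complex.ofReal = (A.map Complex.ofReal)ᴴ :=
    conjTranspose_map _ fun a => (Complex.conj_ofReal a).symm
  rw [show (Complex.ofReal : ℝ → ℂ) = Complex.ofRealHom from rfl, Matrix.map_mul]
  exact hA ▸ posSemidef_conjTranspose_mul_self _

lemma PosSemidef.star_dotProduct_conjTranspose_mulVec_le {R : Type*} [CommRing R] [StarRing R]
    [PartialOrder R] [StarOrderedRing R] {D : Matrix m n R}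
    (hD : (fromBlocks 1 D Dᴴ 1).PosSemidef) (x : m → R) :
    star (Dᴴ *ᵥ x) ⬝ᵥ (Dᴴ *ᵥ x) ≤ star x ⬝ᵥ x := by
  have h := hD.dotProduct_mulVec_nonneg (Sum.elim x (-(Dᴴ *ᵥ x)))
  rw [fromBlocks_mulVec, Function.star_sumElim, sumElim_dotProduct_sumElim] at h
  simp only [Sum.elim_comp_inl, Sum.elim_comp_inr, one_mulVec, mulVec_neg, ← sub_eq_add_neg,
    sub_self, dotProduct_zero, add_zero, dotProduct_sub] at h
  rwa [star_dotProduct_mulVec_conjTranspose_mulVec, sub_nonneg] at h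

/-- The Coxeter transformation `C = w₁ w₂`, parametrised by `A = 2D`. -/
def coxeterMatrix {R : Type*} [CommRing R] (A : Matrix m n R) : Matrix (m ⊕ n) (m ⊕ n) R :=
  fromBlocks (-1) (-A) 0 1 * fromBlocks 1 0 (-Aᵀ) (-1)

lemma coxeterMatrix_map {R S : Type*} [CommRing R] [CommRing S] (A : Matrix m n R)
    (f : R →+* S) : (coxeterMatrix A).map f = coxeterMatrix (A.map f) := by
  simp [coxeterMatrix, Matrix.map_mul, fromBlocks_map, Matrix.map_neg, transpose_map]

section CommRing

variable {R : Type*} [CommRing R]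

lemma coxeterMatrix_mulVec_sumElim (A : Matrix m n R) (x : m → R) (y : n → R) :
    coxeterMatrix A *ᵥ Sum.elim x y =
      Sum.elim (A *ᵥ (Aᵀ *ᵥ x) + A *ᵥ y - x) (-(Aᵀ *ᵥ x) - y) := by
  rw [coxeterMatrix, ← mulVec_mulVec, fromBlocks_mulVec, fromBlocks_mulVec]
  simp [neg_mulVec, mulVec_neg, mulVec_add, sub_eq_add_neg, add_comm]

lemma smul_eq_of_coxeterMatrix_mulVec_eq_smul {A : Matrix m n R} {x : m → R} {y : n → R} {z : R}
    (h : coxeterMatrix A *ᵥ Sum.elim x y = z • Sum.elim x y) :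
    (z + 1) • y = -(Aᵀ *ᵥ x) ∧ (z + 1) ^ 2 • x = z • (A *ᵥ (Aᵀ *ᵥ x)) := by
  rw [coxeterMatrix_mulVec_sumElim] at h
  have hx : A *ᵥ (Aᵀ *ᵥ x) + A *ᵥ y - x = z • x := funext fun i => congrFun h (.inl i)
  have hy : -(Aᵀ *ᵥ x) - y = z • y := funext fun j => congrFun h (.inr j)
  have hy' : (z + 1) • y = -(Aᵀ *ᵥ x) := by linear_combination (norm := module) -hy
  refine ⟨hy', ?_⟩
  have hAy : (z + 1) • (A *ᵥ y) = -(A *ᵥ (Aᵀ *ᵥ x)) := by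
    rw [← mulVec_smul, hy', mulVec_neg]
  linear_combination (norm := module) -(z + 1) • hx + hAy

end CommRing

theorem norm_eq_one_of_isRoot_charpoly_coxeterMatrix {D : Matrix m n ℝ}
    (hD : (fromBlocks 1 D Dᵀ 1).PosSemidef) {z : ℂ}
    (hz : ((coxeterMatrix ((2 : ℝ) • D)).map Complex.ofReal).charpoly.IsRoot z) : ‖z‖ = 1 := by
  set D' := D.map Complex.ofReal
  have hDT : D'ᵀ = D'ᴴ := (conjTranspose_map_ofReal D).symm
  have hB : (fromBlocks 1 D' D'ᴴ 1).PosSemidef := by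
    simpa [fromBlocks_map, ← hDT, transpose_map] using hD.map_ofReal
  have hA : ((2 : ℝ) • D).map Complex.ofRealHom = (2 : ℂ) • D' := by ext; simp [D']
  rw [show (Complex.ofReal : ℝ → ℂ) = Complex.ofRealHom from rfl, coxeterMatrix_map, hA,
    ← charpoly_toLin', ← Module.End.hasEigenvalue_iff_isRoot_charpoly] at hz
  obtain ⟨v, hv⟩ := hz.exists_hasEigenvector
  obtain ⟨x, y, rfl⟩ : ∃ x y, v = Sum.elim x y := ⟨_, _, (Sum.elim_comp_inl_inr v).symm⟩
  have hv' := hv.apply_eq_smul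
  rw [toLin'_apply] at hv'
  obtain ⟨hy, hx⟩ := smul_eq_of_coxeterMatrix_mulVec_eq_smul hv'
  rw [transpose_smul, hDT, smul_mulVec] at hy hx
  rcases eq_or_ne x 0 with rfl | hx0
  · have hy0 : y ≠ 0 := fun hy0 => hv.2 (by rw [hy0, Sum.elim_zero_zero])
    rw [mulVec_zero, smul_zero, neg_zero, smul_eq_zero] at hy
    rw [eq_neg_of_add_eq_zero_left (hy.resolve_right hy0), norm_neg, norm_one]
  · refine Complex.norm_eq_one_of_add_one_sq_mul_eq (dotProduct_star_self_nonneg _)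
      (hB.star_dotProduct_conjTranspose_mulVec_le x) (dotProduct_star_self_pos_iff.2 hx0) ?_
    have hxx := congrArg (star x ⬝ᵥ ·) hx
    simp only [smul_mulVec, mulVec_smul, dotProduct_smul, smul_eq_mul,
      star_dotProduct_mulVec_conjTranspose_mulVec] at hxx
    linear_combination hxx

end Matrix

theorem stmt_11_general (m k : ℕ)
    (D : Matrix (Fin m) (Fin k) ℝ)
    (hint : ∀ i j, ∃ n : ℤ, 2 * D i j = (n : ℝ))
    (C : Matrix (Fin m ⊕ Fin k) (Fin m ⊕ Fin k) ℝ)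
    (hC : C = fromBlocks (-1) ((-2 : ℝ) • D) 0 1 * fromBlocks 1 0 ((-2 : ℝ) • Dᵀ) (-1))
    (B : Matrix (Fin m ⊕ Fin k) (Fin m ⊕ Fin k) ℝ)
    (hB : B = fromBlocks 1 D Dᵀ 1)
    (hposB : B.PosSemidef) :
    ∀ μ : ℂ, (C.map Complex.ofReal).charpoly.IsRoot μ →
      ∃ n : ℕ, 0 < n ∧ μ ^ n = 1 := by
  intro μ hμ
  choose N hN using hint
  have hC' : C = coxeterMatrix ((2 : ℝ) • D) := by
    rw [hC, coxeterMatrix, transpose_smul, ← neg_smul, ← neg_smul]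
  have h2D : (2 : ℝ) • D = (of N).map (Int.castRingHom ℝ) := by
    ext i j; exact hN i j
  have hCN : C.map Complex.ofReal = (coxeterMatrix (of N)).map (algebraMap ℤ ℂ) := by
    rw [hC', h2D, ← coxeterMatrix_map, Matrix.map_map]
    rfl
  have hroot (z : ℂ) :
      (C.map Complex.ofReal).charpoly.IsRoot z ↔ aeval z (coxeterMatrix (of N)).charpoly = 0 := by
    rw [hCN, charpoly_map, IsRoot, eval_map_algebraMap]
  exact exists_pow_eq_one_of_forall_aeval_eq_zero_norm_eq_one (charpoly_monic _)
    (fun z hz => norm_eq_one_of_isRoot_charpoly_coxeterMatrix (hB ▸ hposB) (hC' ▸ (hroot z).2 hz))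
    ((hroot μ).1 hμ)

/-- If `2D` has integer entries and `B = [[I,D],[Dᵀ,I]]` is positive
semidefinite (the extended Dynkin diagram case), then every complex eigenvalue of the
(affine) Coxeter transformation `C` is a root of unity. -/
theorem stmt_11 (m k : ℕ) (hm : 0 < m) (hk : 0 < k)
    (D : Matrix (Fin m) (Fin k) ℝ)
    (hint : ∀ i j, ∃ n : ℤ, 2 * D i j = (n : ℝ))
    (C : Matrix (Fin m ⊕ Fin k) (Fin m ⊕ Fin k) ℝ)
    (hC : C = fromBlocks (-1) ((-2 : ℝ) • D) 0 1 * fromBlocks 1 0 ((-2 : ℝ) • Dᵀ) (-1))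
    (B : Matrix (Fin m ⊕ Fin k) (Fin m ⊕ Fin k) ℝ)
    (hB : B = fromBlocks 1 D Dᵀ 1)
    (hposB : B.PosSemidef) :
    ∀ μ : ℂ, (C.map Complex.ofReal).charpoly.IsRoot μ →
      ∃ n : ℕ, 0 < n ∧ μ ^ n = 1 :=
  stmt_11_general m k D hint C hC B hB hposB
end

section
/- Let n ≥ 1, let K be the n×n Cartan matrix of the Dynkin diagram A_n (K_{ii} = 2, K_{ij} = −1 when |i − j| = 1, and K_{ij} = 0 otherwise), and let C(K) be its Coxeter transformation. Then the characteristic polynomial of C(K) equals 1 + X + X² + ⋯ + Xⁿ. -/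
/-!
The Coxeter transformation `C` of `A_n` is the companion matrix of `S = 1 + X + ⋯ + Xⁿ`: it sends
`e_k` to `e_{k+1}` for `k < n - 1` and `e_{n-1}` to `-(e_0 + ⋯ + e_{n-1})`. So `Cᵏ e_0 = e_k` for
`k < n`, and `S(C) e_0 = e_0 + ⋯ + e_{n-1} + Cⁿ e_0 = 0`. By Cayley–Hamilton `charpoly C - S` also
kills `e_0`; it has degree `< n`, and the vectors `Cᵏ e_0 = e_k` are independent, so it vanishes.
-/

open Matrix Polynomial

theorem Matrix.charpoly_eq_of_cyclic {R : Type*} [CommRing R] {n : ℕ}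
    (M : Matrix (Fin n) (Fin n) R) (v : Fin n → R)
    (hv : ∀ k : Fin n, (M ^ (k : ℕ)) *ᵥ v = Pi.single k 1)
    {p : R[X]} (hp : p.Monic) (hdeg : p.natDegree = n) (hpv : aeval M p *ᵥ v = 0) :
    M.charpoly = p := by
  nontriviality R
  set q := M.charpoly - p
  have hdim : M.charpoly.degree = n := by
    rw [charpoly_degree_eq_dim, Fintype.card_fin]
  have hq_deg : q.degree < n := hdim ▸ degree_sub_lt_left
    (by rw [hdim, degree_eq_natDegree hp.ne_zero, hdeg]) (charpoly_monic M).ne_zero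
    (by rw [(charpoly_monic M).leadingCoeff, hp.leadingCoeff])
  have hqv : aeval M q *ᵥ v = 0 := by
    simp [q, aeval_self_charpoly, neg_mulVec, hpv]
  by_contra hne
  have hq0 : q ≠ 0 := sub_ne_zero.mpr hne
  have hqn : q.natDegree < n := (natDegree_lt_iff_degree_lt hq0).2 hq_deg
  have hcoeff : ∀ k : Fin n, q.coeff k = 0 := by
    intro k
    have := congrFun hqv k
    rw [aeval_eq_sum_range' hqn, sum_mulVec, Finset.sum_range] at this
    simpa [smul_mulVec, hv, Pi.single_apply] using this
  apply hq0
  ext k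
  rw [coeff_zero]
  by_cases hk : k < n
  · exact hcoeff ⟨k, hk⟩
  · exact coeff_eq_zero_of_natDegree_lt (by omega)

theorem Polynomial.natDegree_geom_sum_X {R : Type*} [Semiring R] [Nontrivial R] (n : ℕ) :
    (∑ i ∈ Finset.range (n + 1), (X : R[X]) ^ i).natDegree = n :=
  natDegree_eq_of_le_of_coeff_ne_zero
    (natDegree_sum_le_of_forall_le _ _ fun i hi => by
      simpa [natDegree_X_pow] using Nat.lt_succ_iff.mp (Finset.mem_range.mp hi))
    (by simp [coeff_X_pow])

def simpleReflection {ι R : Type*} [DecidableEq ι] [Ring R] (K : Matrix ι ι R) (i : ι) :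
    Matrix ι ι R :=
  1 - vecMulVec (Pi.single i 1) (K i)

theorem mul_simpleReflection {ι R : Type*} [Fintype ι] [DecidableEq ι] [Ring R]
    (P K : Matrix ι ι R) (i : ι) :
    P * simpleReflection K i = P - vecMulVec (P.col i) (K i) := by
  rw [simpleReflection, mul_sub, mul_one, mul_vecMulVec, mulVec_single_one]

def cartanA (n : ℕ) : Matrix (Fin n) (Fin n) ℤ :=
  of fun i j => if i = j then 2 else if (i : ℕ) + 1 = j ∨ (j : ℕ) + 1 = i then -1 else 0

def coxeterPrefixA (n k : ℕ) : Matrix (Fin n) (Fin n) ℤ :=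
  of fun a b =>
    if (a : ℕ) < k then
      (if (a : ℕ) = b + 1 then 1 else 0) - (if (b : ℕ) + 1 = k then 1 else 0)
        + if (b : ℕ) = k then 1 else 0
    else if a = b then 1 else 0

def coxeterA (n : ℕ) : Matrix (Fin n) (Fin n) ℤ :=
  of fun a b => (if (a : ℕ) = b + 1 then 1 else 0) - if (b : ℕ) + 1 = n then 1 else 0

theorem coxeterPrefixA_zero (n : ℕ) : coxeterPrefixA n 0 = 1 := by
  ext a b
  simp [coxeterPrefixA, one_apply]

theorem coxeterPrefixA_mul_simpleReflection {n k : ℕ} (hk : k < n) :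
    coxeterPrefixA n k * simpleReflection (cartanA n) ⟨k, hk⟩ = coxeterPrefixA n (k + 1) := by
  ext a b
  simp only [mul_simpleReflection, Matrix.sub_apply, vecMulVec_apply, col_apply, coxeterPrefixA,
    cartanA, of_apply, Fin.ext_iff]
  split_ifs <;> omega

theorem prod_take_ofFn_simpleReflection_cartanA {n k : ℕ} (hk : k ≤ n) :
    ((List.ofFn (simpleReflection (cartanA n))).take k).prod = coxeterPrefixA n k := by
  induction k with
  | zero => simp [coxeterPrefixA_zero]
  | succ k ih =>
    rw [List.prod_take_succ _ k (by simpa using hk), ih (by omega), List.getElem_ofFn,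
      coxeterPrefixA_mul_simpleReflection]

theorem coxeterPrefixA_self (n : ℕ) : coxeterPrefixA n n = coxeterA n := by
  ext a b
  simp only [coxeterPrefixA, coxeterA, of_apply]
  split_ifs <;> omega

theorem prod_ofFn_simpleReflection_cartanA (n : ℕ) :
    (List.ofFn (simpleReflection (cartanA n))).prod = coxeterA n := by
  rw [← coxeterPrefixA_self, ← prod_take_ofFn_simpleReflection_cartanA le_rfl,
    List.take_of_length_le (by simp)]

theorem coxeterA_mulVec_single {n k : ℕ} (hk : k + 1 < n) :
    coxeterA n *ᵥ Pi.single ⟨k, by omega⟩ 1 = Pi.single ⟨k + 1, hk⟩ 1 := by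
  ext a
  simp only [mulVec_single_one, col_apply, coxeterA, of_apply, Pi.single_apply, Fin.ext_iff]
  split_ifs <;> omega

theorem coxeterA_mulVec_single_last {n : ℕ} (hn : 0 < n) :
    coxeterA n *ᵥ Pi.single ⟨n - 1, by omega⟩ 1 = -1 := by
  ext a
  simp only [mulVec_single_one, col_apply, coxeterA, of_apply, Pi.neg_apply, Pi.one_apply]
  split_ifs <;> omega

theorem coxeterA_pow_mulVec_single_zero {n : ℕ} (hn : 0 < n) (k : Fin n) :
    coxeterA n ^ (k : ℕ) *ᵥ Pi.single ⟨0, hn⟩ 1 = Pi.single k 1 := by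
  obtain ⟨k, hk⟩ := k
  induction k with
  | zero => rw [pow_zero, one_mulVec]
  | succ k ih =>
    rw [pow_succ', ← mulVec_mulVec, ih (by omega), coxeterA_mulVec_single]

theorem aeval_coxeterA_geom_sum_mulVec {n : ℕ} (hn : 0 < n) :
    aeval (coxeterA n) (∑ i ∈ Finset.range (n + 1), (X : ℤ[X]) ^ i) *ᵥ Pi.single ⟨0, hn⟩ 1
      = 0 := by
  have hlast : coxeterA n ^ n *ᵥ Pi.single ⟨0, hn⟩ 1 = -1 := by
    obtain ⟨m, rfl⟩ : ∃ m, n = m + 1 := ⟨n - 1, by omega⟩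
    rw [pow_succ', ← mulVec_mulVec, coxeterA_pow_mulVec_single_zero hn ⟨m, by omega⟩]
    exact coxeterA_mulVec_single_last hn
  rw [Finset.sum_range_succ, map_add, map_sum, add_mulVec, sum_mulVec]
  simp only [map_pow, aeval_X]
  rw [hlast, Finset.sum_range (fun i => coxeterA n ^ i *ᵥ _)]
  simp only [coxeterA_pow_mulVec_single_zero, Finset.univ_sum_single]
  exact add_neg_cancel 1

theorem charpoly_coxeterA {n : ℕ} (hn : 0 < n) :
    (coxeterA n).charpoly = ∑ i ∈ Finset.range (n + 1), X ^ i :=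
  charpoly_eq_of_cyclic _ _ (coxeterA_pow_mulVec_single_zero hn)
    (monic_geom_sum_X n.succ_ne_zero) (natDegree_geom_sum_X n)
    (aeval_coxeterA_geom_sum_mulVec hn)

/-- For `n ≥ 1` and `K` the Cartan matrix of the Dynkin diagram `A_n`,
the characteristic polynomial of the Coxeter transformation
`C(K) = R₁·R₂·⋯·R_n` equals `1 + X + X² + ⋯ + Xⁿ`. -/
theorem stmt_13 (n : ℕ) (hn : 1 ≤ n)
    (K : Matrix (Fin n) (Fin n) ℤ)
    (hK : ∀ i j : Fin n, K i j =
      if i = j then 2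
      else if (i : ℕ) + 1 = (j : ℕ) ∨ (j : ℕ) + 1 = (i : ℕ) then -1 else 0)
    (R : Fin n → Matrix (Fin n) (Fin n) ℤ)
    (hR : ∀ i a b : Fin n, R i a b =
      if a = i then (if i = b then 1 else 0) - K i b else (if a = b then 1 else 0))
    (C : Matrix (Fin n) (Fin n) ℤ)
    (hC : C = (List.ofFn fun i => R i).prod) :
    C.charpoly = ∑ i ∈ Finset.range (n + 1), X ^ i := by
  have hK' : K = cartanA n := Matrix.ext hK
  have hR' : R = simpleReflection (cartanA n) := by
    ext i a b
    rw [hR, simpleReflection, hK', Matrix.sub_apply, one_apply, vecMulVec_apply, Pi.single_apply]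
    split_ifs <;> simp_all
  rw [hC, hR', prod_ofFn_simpleReflection_cartanA, charpoly_coxeterA hn]
end

section
/- For n ≥ 10 let p_n(X) := Xⁿ + X^{n−1} − (X³ + X⁴ + ⋯ + X^{n−3}) + X + 1, the characteristic polynomial of the Coxeter transformation of the diagram T_{2,3,n−3}. Let ρ_n denote the spectral radius of p_n, i.e., the maximum of |z| over the complex roots z of p_n. Then, as n → ∞, ρ_n converges to the unique real root ρ_max of the equation λ³ − λ − 1 = 0, and ρ_max = ∛(1/2 + √(23/108)) + ∛(1/2 − √(23/108)) (the smallest Pisot number, ≈ 1.324717). -/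
/-!
Multiplying by `X - 1` telescopes the alternating sum:
`(X - 1) pₙ = X ^ (n - 2) (X³ - X - 1) + (X³ + X² - 1)`.
For a real `A > 1` with `A³ - A - 1 < 0` the right side is eventually negative at `A` but positive
at `ρ`, giving a real root in `[A, ρ]`. For `|z| ≥ B > 1` with `B³ - B - 1 > 0` the first term
dominates the second once `n` is large, so no root lies outside the disc of radius `B`.
Hence `ρₙ → ρ`, and Cardano's formula identifies `ρ`.
-/

open Polynomial Filter

noncomputable def coxeterPolyT23 (R : Type*) [CommRing R] (n : ℕ) : R[X] :=
  X ^ n + X ^ (n - 1) - (∑ i ∈ Finset.Icc 3 (n - 3), X ^ i) + X + 1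

namespace coxeterPolyT23

variable {R S : Type*} [CommRing R] [CommRing S]

theorem map (f : R →+* S) (n : ℕ) : (coxeterPolyT23 R n).map f = coxeterPolyT23 S n := by
  simp [coxeterPolyT23, Polynomial.map_sum]

theorem X_sub_one_mul {n : ℕ} (hn : 5 ≤ n) :
    (X - 1) * coxeterPolyT23 R n = X ^ (n - 2) * (X ^ 3 - X - 1) + (X ^ 3 + X ^ 2 - 1) := by
  obtain ⟨k, rfl⟩ : ∃ k, n = k + 5 := ⟨n - 5, by omega⟩
  have hsum : (∑ i ∈ Finset.Icc 3 (k + 2), (X : R[X]) ^ i) * (X - 1) = X ^ (k + 3) - X ^ 3 := by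
    rw [← Finset.Ico_add_one_right_eq_Icc, Finset.sum_Ico_eq_sub _ (by omega), sub_mul,
      geom_sum_mul, geom_sum_mul]
    ring
  simp only [coxeterPolyT23, show k + 5 - 1 = k + 4 by omega, show k + 5 - 2 = k + 3 by omega,
    show k + 5 - 3 = k + 2 by omega]
  linear_combination (-1 : R[X]) * hsum

theorem sub_one_mul_eval {n : ℕ} (hn : 5 ≤ n) (x : R) :
    (x - 1) * (coxeterPolyT23 R n).eval x = x ^ (n - 2) * (x ^ 3 - x - 1) + (x ^ 3 + x ^ 2 - 1) := by
  simpa using congrArg (eval x) (X_sub_one_mul (R := R) hn)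

end coxeterPolyT23

theorem strictMonoOn_cubic : StrictMonoOn (fun x : ℝ => x ^ 3 - x - 1) (Set.Ici 1) := by
  intro x (hx : 1 ≤ x) y _ hxy
  have : 0 < y ^ 2 + x * y + x ^ 2 - 1 := by nlinarith
  nlinarith [mul_pos (sub_pos.mpr hxy) this]

theorem one_lt_of_cubic_eq_zero {x : ℝ} (h : x ^ 3 - x - 1 = 0) : 1 < x := by
  nlinarith [sq_nonneg (x - 1), sq_nonneg (x + 1), sq_nonneg x]

theorem eq_of_cubic_eq_zero {x y : ℝ} (hx : x ^ 3 - x - 1 = 0) (hy : y ^ 3 - y - 1 = 0) :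
    x = y :=
  strictMonoOn_cubic.injOn (one_lt_of_cubic_eq_zero hx).le (one_lt_of_cubic_eq_zero hy).le
    (hx.trans hy.symm)

noncomputable def smallestPisot : ℝ :=
  (1 / 2 + Real.sqrt (23 / 108)) ^ ((1 : ℝ) / 3) + (1 / 2 - Real.sqrt (23 / 108)) ^ ((1 : ℝ) / 3)

theorem rpow_one_third_pow_three {x : ℝ} (hx : 0 ≤ x) : (x ^ ((1 : ℝ) / 3)) ^ 3 = x := by
  rw [← Real.rpow_natCast, ← Real.rpow_mul hx]
  norm_num

theorem smallestPisot_cubic : smallestPisot ^ 3 - smallestPisot - 1 = 0 := by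
  set s := Real.sqrt (23 / 108)
  have hs : s ^ 2 = 23 / 108 := Real.sq_sqrt (by norm_num)
  have hs0 : 0 ≤ s := Real.sqrt_nonneg _
  have hplus : (0 : ℝ) ≤ 1 / 2 + s := by linarith
  have hminus : (0 : ℝ) ≤ 1 / 2 - s := by nlinarith
  set a := (1 / 2 + s) ^ ((1 : ℝ) / 3)
  set b := (1 / 2 - s) ^ ((1 : ℝ) / 3)
  have ha : a ^ 3 = 1 / 2 + s := rpow_one_third_pow_three hplus
  have hb : b ^ 3 = 1 / 2 - s := rpow_one_third_pow_three hminus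
  have hab : a * b = 1 / 3 := by
    have hprod : (1 / 2 + s) * (1 / 2 - s) = (1 / 3 : ℝ) ^ 3 := by nlinarith
    rw [← Real.mul_rpow hplus hminus, hprod, ← Real.rpow_natCast, ← Real.rpow_mul (by norm_num)]
    norm_num
  change (a + b) ^ 3 - (a + b) - 1 = 0
  linear_combination ha + hb + 3 * (a + b) * hab

theorem eventually_exists_root_mem_Icc {A B : ℝ} (hA : 1 < A) (hAB : A ≤ B)
    (hcA : A ^ 3 - A - 1 < 0) (hcB : 0 ≤ B ^ 3 - B - 1) :
    ∀ᶠ n in atTop, ∃ x ∈ Set.Icc A B, (coxeterPolyT23 ℝ n).IsRoot x := by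
  have hneg : ∀ᶠ n in atTop, A ^ (n - 2) * (A ^ 3 - A - 1) + (A ^ 3 + A ^ 2 - 1) < 0 :=
    (tendsto_atBot_add_const_right _ _ (((tendsto_pow_atTop_atTop_of_one_lt hA).comp
      (tendsto_sub_atTop_nat 2)).atTop_mul_const_of_neg hcA)).eventually_lt_atBot 0
  filter_upwards [hneg, eventually_ge_atTop 5] with n hn h5
  have hfA : (coxeterPolyT23 ℝ n).eval A ≤ 0 := by
    have := coxeterPolyT23.sub_one_mul_eval h5 A
    nlinarith
  have hfB : 0 ≤ (coxeterPolyT23 ℝ n).eval B := by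
    have := coxeterPolyT23.sub_one_mul_eval h5 B
    have hB : 1 < B := hA.trans_le hAB
    have : 0 ≤ B ^ (n - 2) * (B ^ 3 - B - 1) := by positivity
    nlinarith [one_lt_pow₀ hB (by norm_num : (2 : ℕ) ≠ 0)]
  exact intermediate_value_Icc hAB (coxeterPolyT23 ℝ n).continuous.continuousOn ⟨hfA, hfB⟩

theorem norm_cubic_ge {𝕜 : Type*} [NormedField 𝕜] (z : 𝕜) :
    ‖z‖ ^ 3 - ‖z‖ - 1 ≤ ‖z ^ 3 - z - 1‖ := by
  calc ‖z‖ ^ 3 - ‖z‖ - 1 = ‖z ^ 3‖ - (‖z‖ + ‖(1 : 𝕜)‖) := by rw [norm_pow, norm_one]; ring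
    _ ≤ ‖z ^ 3‖ - ‖z + 1‖ := by gcongr; exact norm_add_le _ _
    _ ≤ ‖z ^ 3 - (z + 1)‖ := norm_sub_norm_le _ _
    _ = ‖z ^ 3 - z - 1‖ := by rw [sub_add_eq_sub_sub]

theorem norm_cubic_le {𝕜 : Type*} [NormedField 𝕜] {z : 𝕜} (hz : 1 ≤ ‖z‖) :
    ‖z ^ 3 + z ^ 2 - 1‖ ≤ 3 * ‖z‖ ^ 3 := by
  have h2 : ‖z‖ ^ 2 ≤ ‖z‖ ^ 3 := pow_le_pow_right₀ hz (by norm_num)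
  have h1 : 1 ≤ ‖z‖ ^ 3 := one_le_pow₀ hz
  calc ‖z ^ 3 + z ^ 2 - 1‖ ≤ ‖z ^ 3‖ + ‖z ^ 2‖ + ‖(1 : 𝕜)‖ := norm_sub_le_of_le (norm_add_le _ _) le_rfl
    _ ≤ 3 * ‖z‖ ^ 3 := by rw [norm_pow, norm_pow, norm_one]; linarith

theorem eventually_norm_lt_of_isRoot {𝕜 : Type*} [NormedField 𝕜] {B : ℝ} (hB : 1 < B)
    (hcB : 0 < B ^ 3 - B - 1) :
    ∀ᶠ n in atTop, ∀ z : 𝕜, (coxeterPolyT23 𝕜 n).IsRoot z → ‖z‖ < B := by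
  have hlarge : ∀ᶠ n in atTop, 3 < B ^ (n - 5) * (B ^ 3 - B - 1) :=
    (((tendsto_pow_atTop_atTop_of_one_lt hB).comp (tendsto_sub_atTop_nat 5)).atTop_mul_const
      hcB).eventually_gt_atTop 3
  filter_upwards [hlarge, eventually_ge_atTop 5] with n hn h5 z hz
  by_contra! hzB
  set r := ‖z‖
  have hr : 1 < r := hB.trans_le hzB
  have hbalance : z ^ (n - 2) * (z ^ 3 - z - 1) = -(z ^ 3 + z ^ 2 - 1) := by
    have := coxeterPolyT23.sub_one_mul_eval h5 z
    rw [hz.eq_zero, mul_zero] at this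
    linear_combination -this
  have hdominate : r ^ (n - 5) * r ^ 3 * (B ^ 3 - B - 1) ≤ 3 * r ^ 3 := by
    calc r ^ (n - 5) * r ^ 3 * (B ^ 3 - B - 1) = r ^ (n - 2) * (B ^ 3 - B - 1) := by
          rw [← pow_add, show n - 5 + 3 = n - 2 by omega]
      _ ≤ r ^ (n - 2) * (r ^ 3 - r - 1) := by
          have := strictMonoOn_cubic.monotoneOn hB.le (hB.le.trans hzB) hzB
          gcongr
      _ ≤ r ^ (n - 2) * ‖z ^ 3 - z - 1‖ := by gcongr; exact norm_cubic_ge z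
      _ = ‖z ^ 3 + z ^ 2 - 1‖ := by rw [← norm_pow, ← norm_mul, hbalance, norm_neg]
      _ ≤ 3 * r ^ 3 := norm_cubic_le hr.le
  have hpow : B ^ (n - 5) ≤ r ^ (n - 5) := pow_le_pow_left₀ (by linarith) hzB _
  have : r ^ (n - 5) * (B ^ 3 - B - 1) ≤ 3 := by
    nlinarith [pow_pos (zero_lt_one.trans hr) 3]
  nlinarith

/-- For `n ≥ 10` let `p_n(X) = Xⁿ + X^{n−1} − (X³ + ⋯ + X^{n−3}) + X + 1`
(the characteristic polynomial of the Coxeter transformation of `T_{2,3,n−3}`) and let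
`ρ_n` be the maximum of `|z|` over the complex roots of `p_n`. Then `ρ_n` converges, as
`n → ∞`, to the unique real root `ρ_max` of `λ³ − λ − 1 = 0`, and
`ρ_max = ∛(1/2 + √(23/108)) + ∛(1/2 − √(23/108))` (the smallest Pisot number). -/
theorem stmt_15 (p : ℕ → Polynomial ℂ)
    (hp : ∀ n : ℕ, 10 ≤ n →
      p n = X ^ n + X ^ (n - 1) - (∑ i ∈ Finset.Icc 3 (n - 3), X ^ i) + X + 1)
    (rho : ℕ → ℝ)
    (hrho : ∀ n : ℕ, 10 ≤ n →
      (∃ z : ℂ, (p n).IsRoot z ∧ ‖z‖ = rho n) ∧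
      (∀ z : ℂ, (p n).IsRoot z → ‖z‖ ≤ rho n)) :
    ∃ ρmax : ℝ,
      ρmax ^ 3 - ρmax - 1 = 0 ∧
      (∀ r : ℝ, r ^ 3 - r - 1 = 0 → r = ρmax) ∧
      ρmax = (1 / 2 + Real.sqrt (23 / 108)) ^ ((1 : ℝ) / 3)
           + (1 / 2 - Real.sqrt (23 / 108)) ^ ((1 : ℝ) / 3) ∧
      Tendsto rho atTop (nhds ρmax) := by
  have hpn : ∀ n, 10 ≤ n → p n = coxeterPolyT23 ℂ n := hp
  have hρ := smallestPisot_cubic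
  have hρ1 := one_lt_of_cubic_eq_zero hρ
  refine ⟨smallestPisot, hρ, fun r hr => eq_of_cubic_eq_zero hr hρ, rfl,
    tendsto_order.2 ⟨fun a ha => ?_, fun b hb => ?_⟩⟩
  · obtain ⟨A, hA, hAρ⟩ := exists_between (max_lt ha hρ1)
    have hA1 : 1 < A := (le_max_right a 1).trans_lt hA
    have hcA : A ^ 3 - A - 1 < 0 := hρ ▸ strictMonoOn_cubic hA1.le hρ1.le hAρ
    filter_upwards [eventually_exists_root_mem_Icc hA1 hAρ.le hcA hρ.ge,
      eventually_ge_atTop 10] with n ⟨x, hx, hroot⟩ hn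
    have hxroot : (p n).IsRoot (x : ℂ) := by
      rw [hpn n hn, ← coxeterPolyT23.map Complex.ofRealHom]
      exact hroot.map
    have := (hrho n hn).2 _ hxroot
    rw [Complex.norm_real, Real.norm_of_nonneg (by linarith [hx.1])] at this
    linarith [hx.1, le_max_left a 1]
  · have hcb : 0 < b ^ 3 - b - 1 := hρ ▸ strictMonoOn_cubic hρ1.le (hρ1.trans hb).le hb
    filter_upwards [eventually_norm_lt_of_isRoot (𝕜 := ℂ) (hρ1.trans hb) hcb,
      eventually_ge_atTop 10] with n hbound hn
    obtain ⟨z, hz, hzρ⟩ := (hrho n hn).1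
    exact hzρ ▸ hbound z (hpn n hn ▸ hz)
end

section
/- For n ≥ 4 let q_n(X) := X^{n+4} + X^{n+3} − 2X^{n+1} − 3(X⁴ + X⁵ + ⋯ + Xⁿ) − 2X³ + X + 1, the characteristic polynomial of the Coxeter transformation of the diagram T_{3,3,n}. Let ρ_n denote the spectral radius of q_n, i.e., the maximum of |z| over the complex roots z of q_n. Then, as n → ∞, ρ_n converges to the maximal root ρ_max of the equation λ² − λ − 1 = 0, namely ρ_max = (1 + √5)/2, the golden mean. -/
/-!
Multiplying by `X - 1` sums the geometric block `X⁴ + ⋯ + Xⁿ`, and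
`(X - 1) q_n = (X² + X + 1) (X^{n+1} (X² - X - 1) + (X² + X - 1))`.
The cyclotomic factor only has roots on the unit circle, so the spectral radius is governed
by the second factor `F_n = coxeterFactor n`. For `1 < x < φ` we have `x² - x - 1 < 0`, so
`F_n(x) → -∞` while `F_n(φ) = 2φ > 0`: by the intermediate value theorem `F_n` has a real root
in `[x, φ]`. Conversely, at a root `z` with `‖z‖ ≥ b > φ`, the identity
`‖z‖^{n+1} ‖z² - z - 1‖ = ‖z² + z - 1‖ ≤ 3‖z‖²` together with
`‖z² - z - 1‖ = ‖z - φ‖ ‖z - ψ‖ ≥ b - φ` forces `b^{n-1} (b - φ) ≤ 3`, false for large `n`.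
-/

open Polynomial Filter Real goldenRatio

noncomputable def coxeterPolynomial (R : Type*) [CommRing R] (n : ℕ) : R[X] :=
  X ^ (n + 4) + X ^ (n + 3) - 2 * X ^ (n + 1)
    - 3 * (∑ i ∈ Finset.Icc 4 n, X ^ i) - 2 * X ^ 3 + X + 1

def coxeterFactor {R : Type*} [CommRing R] (n : ℕ) (x : R) : R :=
  x ^ (n + 1) * (x ^ 2 - x - 1) + (x ^ 2 + x - 1)

theorem sub_one_mul_eval_coxeterPolynomial {R : Type*} [CommRing R] {n : ℕ} (hn : 4 ≤ n)
    (z : R) :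
    (z - 1) * (coxeterPolynomial R n).eval z = (z ^ 2 + z + 1) * coxeterFactor n z := by
  have hgeom : (∑ i ∈ Finset.Icc 4 n, z ^ i) * (z - 1) = z ^ (n + 1) - z ^ 4 := by
    rw [← Finset.Ico_add_one_right_eq_Icc, geom_sum_Ico_mul z (by omega)]
  simp only [coxeterPolynomial, coxeterFactor, eval_add, eval_sub, eval_mul, eval_pow,
    eval_X, eval_one, eval_ofNat, eval_finsetSum]
  linear_combination (-3 : R) * hgeom

theorem isRoot_coxeterPolynomial_of_coxeterFactor_eq_zero {R : Type*} [CommRing R] [IsDomain R]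
    {n : ℕ} (hn : 4 ≤ n) {z : R} (hz : z ≠ 1) (hF : coxeterFactor n z = 0) :
    (coxeterPolynomial R n).IsRoot z := by
  have h := sub_one_mul_eval_coxeterPolynomial hn z
  rw [hF, mul_zero] at h
  exact (mul_eq_zero.mp h).resolve_left (sub_ne_zero.mpr hz)

theorem norm_eq_one_of_sq_add_add_one_eq_zero {𝕜 : Type*} [NormedField 𝕜] {z : 𝕜}
    (hz : z ^ 2 + z + 1 = 0) : ‖z‖ = 1 := by
  have hcube : z ^ 3 = 1 := by linear_combination (z - 1) * hz
  exact (pow_eq_one_iff_of_nonneg (norm_nonneg z) three_ne_zero).mp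
    (by rw [← norm_pow, hcube, norm_one])

theorem coxeterFactor_eq_zero_of_isRoot {𝕜 : Type*} [NormedField 𝕜] {n : ℕ} (hn : 4 ≤ n)
    {z : 𝕜} (hz : 1 < ‖z‖) (hroot : (coxeterPolynomial 𝕜 n).IsRoot z) :
    coxeterFactor n z = 0 := by
  have h := sub_one_mul_eval_coxeterPolynomial hn z
  rw [hroot.eq_zero, mul_zero, eq_comm] at h
  refine (mul_eq_zero.mp h).resolve_left fun h3 => ?_
  exact hz.ne' (norm_eq_one_of_sq_add_add_one_eq_zero h3)

theorem sq_sub_sub_one_eq_mul {R : Type*} [CommRing R] [Algebra ℝ R] (z : R) :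
    z ^ 2 - z - 1 = (z - algebraMap ℝ R φ) * (z - algebraMap ℝ R ψ) := by
  have hsum := congrArg (algebraMap ℝ R) goldenRatio_add_goldenConj
  have hprod := congrArg (algebraMap ℝ R) goldenRatio_mul_goldenConj
  simp only [map_add, map_mul, map_one, map_neg] at hsum hprod
  linear_combination z * hsum - hprod

theorem le_goldenRatio_of_sq_sub_sub_one_eq_zero {r : ℝ} (hr : r ^ 2 - r - 1 = 0) : r ≤ φ := by
  rw [sq_sub_sub_one_eq_mul, Algebra.algebraMap_self_apply, Algebra.algebraMap_self_apply]
    at hr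
  rcases mul_eq_zero.mp hr with h | h
  · linarith
  · linarith [goldenConj_neg, goldenRatio_pos]

theorem norm_sub_goldenRatio_le_norm_sq_sub_sub_one {𝕜 : Type*} [NormedField 𝕜]
    [NormedAlgebra ℝ 𝕜] {z : 𝕜} (hz : φ ≤ ‖z‖) :
    ‖z‖ - φ ≤ ‖z ^ 2 - z - 1‖ := by
  have hφ : ‖z‖ - φ ≤ ‖z - algebraMap ℝ 𝕜 φ‖ := by
    have h := norm_sub_norm_le z (algebraMap ℝ 𝕜 φ)
    rwa [norm_algebraMap', Real.norm_of_nonneg goldenRatio_pos.le] at h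
  have hψ : 1 ≤ ‖z - algebraMap ℝ 𝕜 ψ‖ := by
    have h := norm_sub_norm_le z (algebraMap ℝ 𝕜 ψ)
    rw [norm_algebraMap', Real.norm_of_nonpos goldenConj_neg.le] at h
    linarith [goldenRatio_add_goldenConj]
  rw [sq_sub_sub_one_eq_mul, norm_mul]
  simpa using mul_le_mul hφ hψ zero_le_one (norm_nonneg _)

theorem eventually_exists_coxeterFactor_eq_zero_mem_Icc {x : ℝ} (hx : 1 < x) (hxφ : x < φ) :
    ∀ᶠ n in atTop, ∃ t ∈ Set.Icc x φ, coxeterFactor n t = 0 := by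
  have hneg : x ^ 2 - x - 1 < 0 := by
    rw [sq_sub_sub_one_eq_mul, Algebra.algebraMap_self_apply, Algebra.algebraMap_self_apply]
    exact mul_neg_of_neg_of_pos (sub_neg.mpr hxφ) (by linarith [goldenConj_neg])
  have hlim : Tendsto (fun n => coxeterFactor n x) atTop atBot :=
    tendsto_atBot_add_const_right _ _ <|
      ((tendsto_pow_atTop_atTop_of_one_lt hx).comp
        (tendsto_add_atTop_nat 1)).atTop_mul_const_of_neg hneg
  filter_upwards [hlim.eventually_lt_atBot 0] with n hn
  have hφ : 0 < coxeterFactor n φ := by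
    rw [coxeterFactor, goldenRatio_sq]; linarith [goldenRatio_pos]
  exact intermediate_value_Icc hxφ.le (by unfold coxeterFactor; fun_prop) ⟨hn.le, hφ.le⟩

theorem eventually_norm_lt_of_coxeterFactor_eq_zero (𝕜 : Type*) [NormedField 𝕜]
    [NormedAlgebra ℝ 𝕜] {b : ℝ} (hb : φ < b) :
    ∀ᶠ n in atTop, ∀ z : 𝕜, coxeterFactor n z = 0 → ‖z‖ < b := by
  have hb1 : 1 < b := one_lt_goldenRatio.trans hb
  have hlim : Tendsto (fun n => b ^ (n - 1) * (b - φ)) atTop atTop :=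
    ((tendsto_pow_atTop_atTop_of_one_lt hb1).comp (tendsto_sub_atTop_nat 1)).atTop_mul_const
      (sub_pos.mpr hb)
  filter_upwards [eventually_ge_atTop 1, hlim.eventually_gt_atTop 3] with n hn hbig z hz
  by_contra! hzb
  set r := ‖z‖
  have hr1 : 1 ≤ r := hb1.le.trans hzb
  have hlower : b - φ ≤ ‖z ^ 2 - z - 1‖ :=
    le_trans (by linarith) (norm_sub_goldenRatio_le_norm_sq_sub_sub_one (hb.le.trans hzb))
  have hupper : ‖z ^ 2 + z - 1‖ ≤ 3 * r ^ 2 := by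
    calc ‖z ^ 2 + z - 1‖ ≤ ‖z ^ 2‖ + ‖z‖ + ‖(1 : 𝕜)‖ :=
          norm_sub_le_of_le (norm_add_le _ _) le_rfl
      _ = r ^ 2 + r + 1 := by rw [norm_pow, norm_one]
      _ ≤ 3 * r ^ 2 := by nlinarith
  have hroot : r ^ (n + 1) * ‖z ^ 2 - z - 1‖ = ‖z ^ 2 + z - 1‖ := by
    rw [← norm_pow, ← norm_mul, eq_neg_of_add_eq_zero_left hz, norm_neg]
  have hsplit : r ^ (n + 1) = r ^ (n - 1) * r ^ 2 := by rw [← pow_add]; congr 1; omega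
  have hr2 : 0 < r ^ 2 := by positivity
  have : r ^ (n - 1) * (b - φ) ≤ 3 := by
    refine le_of_mul_le_mul_right ?_ hr2
    calc r ^ (n - 1) * (b - φ) * r ^ 2 = r ^ (n + 1) * (b - φ) := by rw [hsplit]; ring
      _ ≤ r ^ (n + 1) * ‖z ^ 2 - z - 1‖ := by gcongr
      _ ≤ 3 * r ^ 2 := hroot ▸ hupper
  have hbr : b ^ (n - 1) ≤ r ^ (n - 1) := pow_le_pow_left₀ (by linarith) hzb _
  nlinarith [sub_pos.mpr hb]

/-- For `n ≥ 4` let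
`q_n(X) = X^{n+4} + X^{n+3} − 2X^{n+1} − 3(X⁴ + ⋯ + Xⁿ) − 2X³ + X + 1`
(the characteristic polynomial of the Coxeter transformation of `T_{3,3,n}`) and let
`ρ_n` be the maximum of `|z|` over the complex roots of `q_n`. Then `ρ_n` converges, as
`n → ∞`, to the maximal root `ρ_max = (1 + √5)/2` (the golden mean) of `λ² − λ − 1 = 0`. -/
theorem stmt_16 (q : ℕ → Polynomial ℂ)
    (hq : ∀ n : ℕ, 4 ≤ n →
      q n = X ^ (n + 4) + X ^ (n + 3) - 2 * X ^ (n + 1)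
            - 3 * (∑ i ∈ Finset.Icc 4 n, X ^ i) - 2 * X ^ 3 + X + 1)
    (rho : ℕ → ℝ)
    (hrho : ∀ n : ℕ, 4 ≤ n →
      (∃ z : ℂ, (q n).IsRoot z ∧ ‖z‖ = rho n) ∧
      (∀ z : ℂ, (q n).IsRoot z → ‖z‖ ≤ rho n)) :
    ∃ ρmax : ℝ,
      ρmax ^ 2 - ρmax - 1 = 0 ∧
      (∀ r : ℝ, r ^ 2 - r - 1 = 0 → r ≤ ρmax) ∧
      ρmax = (1 + Real.sqrt 5) / 2 ∧
      Tendsto rho atTop (nhds ρmax) := by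
  have hq' : ∀ n, 4 ≤ n → q n = coxeterPolynomial ℂ n := hq
  refine ⟨φ, by rw [goldenRatio_sq]; ring, fun r => le_goldenRatio_of_sq_sub_sub_one_eq_zero,
    rfl, tendsto_order.2 ⟨fun a ha => ?_, fun b hb => ?_⟩⟩
  · obtain ⟨x, hx, hxφ⟩ := exists_between (max_lt ha one_lt_goldenRatio)
    have hx1 : 1 < x := (le_max_right a 1).trans_lt hx
    filter_upwards [eventually_ge_atTop 4,
      eventually_exists_coxeterFactor_eq_zero_mem_Icc hx1 hxφ] with n hn ⟨t, ⟨hxt, _⟩, hF⟩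
    have hFℂ : coxeterFactor n (t : ℂ) = 0 := by
      simpa [coxeterFactor] using congrArg ((↑) : ℝ → ℂ) hF
    have hroot : (q n).IsRoot (t : ℂ) := by
      rw [hq' n hn]
      exact isRoot_coxeterPolynomial_of_coxeterFactor_eq_zero hn
        (by exact_mod_cast (hx1.trans_le hxt).ne') hFℂ
    calc a < x := (le_max_left a 1).trans_lt hx
      _ ≤ t := hxt
      _ = ‖(t : ℂ)‖ := by rw [Complex.norm_real, Real.norm_of_nonneg (by linarith)]
      _ ≤ rho n := (hrho n hn).2 _ hroot
  · filter_upwards [eventually_ge_atTop 4, eventually_norm_lt_of_coxeterFactor_eq_zero ℂ hb]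
      with n hn hlt
    obtain ⟨⟨w, hw, hnorm⟩, -⟩ := hrho n hn
    rw [← hnorm]
    rcases le_or_gt ‖w‖ 1 with h1 | h1
    · linarith [one_lt_goldenRatio]
    · rw [hq' n hn] at hw
      exact hlt w (coxeterFactor_eq_zero_of_isRoot hn h1 hw)
end

section
/- For n ≥ 4 let r_n(X) := X^{n+4} + X^{n+3} − X^{n+1} − 2(X⁴ + X⁵ + ⋯ + Xⁿ) − X³ + X + 1, the characteristic polynomial of the Coxeter transformation of the diagram T_{2,4,n}. Let ρ_n denote the spectral radius of r_n, i.e., the maximh of |z| over the complex roots z of r_n. Then, as n → ∞, ρ_n converges to the unique real root ρ_max of the equation λ³ − λ² − 1 = 0, and ρ_max = 1/3 + ∛(58/108 + √(31/108)) + ∛(58/108 − √(31/108)) (≈ 1.465571). -/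
/-!
Multiplying by `X - 1` telescopes the geometric sum in `r_n`:
`(z - 1) r_n(z) = (z + 1) (z^{n+1} P(z) + Q(z))` with `P = z³ - z² - 1` and `Q = z³ + z - 1`.
For `|z| ≥ t > ρ_max` the term `|z|^{n+1} |P(z)| ≥ |z|^{n+1} P(t)` eventually beats `|Q(z)| ≤ 3|z|³`,
so all roots of `r_n` lie in the disc of radius `t` for large `n`. For `1 < y < ρ_max` we have
`P(y) < 0`, so `x^{n+1} P(x) + Q(x)` is negative at `y` for large `n` and positive at `y + 1`,
giving a real root of `r_n` beyond `y`. The closed form of `ρ_max` is Cardano's formula for the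
depressed cubic `μ³ - μ/3 - 29/27` obtained by `λ = μ + 1/3`.
-/

open Polynomial Filter

lemma one_lt_of_cubic_nonneg {s : ℝ} (hs : 0 ≤ s ^ 3 - s ^ 2 - 1) : 1 < s := by
  by_contra! h
  nlinarith [sq_nonneg s, mul_nonneg (sq_nonneg s) (sub_nonneg.2 h)]

lemma cubic_strictMonoOn : StrictMonoOn (fun x : ℝ => x ^ 3 - x ^ 2 - 1) (Set.Ici 1) := by
  intro a (ha : 1 ≤ a) b (hb : 1 ≤ b) hab
  dsimp only
  nlinarith [mul_pos (sub_pos.2 hab) (show 0 < b ^ 2 + a * b + a ^ 2 - a - b by nlinarith)]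

lemma add_rpow_third_pow_three {u v : ℝ} (hu : 0 ≤ u) (hv : 0 ≤ v) :
    (u ^ (1 / 3 : ℝ) + v ^ (1 / 3 : ℝ)) ^ 3
      = u + v + 3 * (u * v) ^ (1 / 3 : ℝ) * (u ^ (1 / 3 : ℝ) + v ^ (1 / 3 : ℝ)) := by
  have hcube {w : ℝ} (hw : 0 ≤ w) : (w ^ (1 / 3 : ℝ)) ^ 3 = w := by
    rw [← Real.rpow_natCast, ← Real.rpow_mul hw]; norm_num
  rw [Real.mul_rpow hu hv]
  linear_combination hcube hu + hcube hv

lemma cubic_eq_zero_of_eq_cardano {ρ : ℝ}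
    (hρ : ρ = 1 / 3 + (58 / 108 + Real.sqrt (31 / 108)) ^ ((1 : ℝ) / 3)
      + (58 / 108 - Real.sqrt (31 / 108)) ^ ((1 : ℝ) / 3)) :
    ρ ^ 3 - ρ ^ 2 - 1 = 0 := by
  set v := Real.sqrt (31 / 108)
  have hv0 : 0 ≤ v := Real.sqrt_nonneg _
  have hv2 : v ^ 2 = 31 / 108 := Real.sq_sqrt (by norm_num)
  have hv : v ≤ 58 / 108 := by nlinarith
  have hprod : ((58 / 108 + v) * (58 / 108 - v)) ^ (1 / 3 : ℝ) = 1 / 9 := by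
    rw [show (58 / 108 + v) * (58 / 108 - v) = (1 / 9) ^ 3 by linear_combination -hv2,
      ← Real.rpow_natCast, ← Real.rpow_mul (by norm_num)]
    norm_num
  have hsum := add_rpow_third_pow_three (u := 58 / 108 + v) (v := 58 / 108 - v)
    (by positivity) (by linarith)
  rw [hprod] at hsum
  subst hρ
  linear_combination hsum

/-- The polynomial `r_n`. -/
noncomputable def coxeterPolyT24 (R : Type*) [CommRing R] (n : ℕ) : R[X] :=
  X ^ (n + 4) + X ^ (n + 3) - X ^ (n + 1) - 2 * (∑ i ∈ Finset.Icc 4 n, X ^ i) - X ^ 3 + X + 1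

section CommRing

variable {R : Type*} [CommRing R] {n : ℕ}

lemma sub_one_mul_eval_coxeterPolyT24 (hn : 3 ≤ n) (z : R) :
    (z - 1) * (coxeterPolyT24 R n).eval z
      = (z + 1) * (z ^ (n + 1) * (z ^ 3 - z ^ 2 - 1) + (z ^ 3 + z - 1)) := by
  have hgeom : (∑ i ∈ Finset.Icc 4 n, z ^ i) * (z - 1) = z ^ (n + 1) - z ^ 4 := by
    rw [← Finset.Ico_add_one_right_eq_Icc, Finset.sum_Ico_eq_sub _ (by omega), sub_mul,
      geom_sum_mul, geom_sum_mul]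
    ring
  simp only [coxeterPolyT24, eval_add, eval_sub, eval_mul, eval_pow, eval_X, eval_one,
    eval_finsetSum, eval_ofNat]
  linear_combination (-2 : R) * hgeom

lemma isRoot_coxeterPolyT24_iff [IsDomain R] (hn : 3 ≤ n) {z : R} (h1 : z ≠ 1) (h2 : z ≠ -1) :
    (coxeterPolyT24 R n).IsRoot z ↔ z ^ (n + 1) * (z ^ 3 - z ^ 2 - 1) + (z ^ 3 + z - 1) = 0 := by
  rw [IsRoot.def, ← mul_right_inj' (sub_ne_zero.2 h1), sub_one_mul_eval_coxeterPolyT24 hn,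
    mul_zero, mul_eq_zero, or_iff_right (fun h => h2 (eq_neg_of_add_eq_zero_left h))]

end CommRing

lemma norm_pow_mul_cubic_le_of_isRoot {n : ℕ} (hn : 3 ≤ n) {z : ℂ}
    (hz : (coxeterPolyT24 ℂ n).IsRoot z) (h1 : 1 < ‖z‖) :
    ‖z‖ ^ (n + 1) * (‖z‖ ^ 3 - ‖z‖ ^ 2 - 1) ≤ 3 * ‖z‖ ^ 3 := by
  have hne1 : z ≠ 1 := by rintro rfl; simp at h1
  have hne2 : z ≠ -1 := by rintro rfl; simp at h1
  have hG : z ^ (n + 1) * (z ^ 3 - z ^ 2 - 1) = -(z ^ 3 + z - 1) :=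
    eq_neg_of_add_eq_zero_left ((isRoot_coxeterPolyT24_iff hn hne1 hne2).1 hz)
  have hP : ‖z‖ ^ 3 - ‖z‖ ^ 2 - 1 ≤ ‖z ^ 3 - z ^ 2 - 1‖ := by
    have := norm_sub_norm_le (z ^ 3 - z ^ 2) 1
    have := norm_sub_norm_le (z ^ 3) (z ^ 2)
    simp only [norm_pow, norm_one] at *
    linarith
  have hQ : ‖z ^ 3 + z - 1‖ ≤ 3 * ‖z‖ ^ 3 := by
    have := norm_sub_le (z ^ 3 + z) 1
    have := norm_add_le (z ^ 3) z
    have := le_self_pow₀ h1.le (show 3 ≠ 0 by norm_num)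
    have := one_le_pow₀ (n := 3) h1.le
    simp only [norm_pow, norm_one] at *
    linarith
  calc ‖z‖ ^ (n + 1) * (‖z‖ ^ 3 - ‖z‖ ^ 2 - 1) ≤ ‖z‖ ^ (n + 1) * ‖z ^ 3 - z ^ 2 - 1‖ := by
        gcongr
    _ = ‖z ^ 3 + z - 1‖ := by rw [← norm_pow, ← norm_mul, hG, norm_neg]
    _ ≤ 3 * ‖z‖ ^ 3 := hQ

lemma eventually_norm_lt_of_isRoot_s17 {t : ℝ} (ht : 0 < t ^ 3 - t ^ 2 - 1) :
    ∀ᶠ n in atTop, ∀ z : ℂ, (coxeterPolyT24 ℂ n).IsRoot z → ‖z‖ < t := by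
  have ht1 := one_lt_of_cubic_nonneg ht.le
  obtain ⟨N, hN⟩ := pow_unbounded_of_one_lt (3 / (t ^ 3 - t ^ 2 - 1)) ht1
  filter_upwards [eventually_ge_atTop (N + 3)] with n hn z hz
  by_contra! htz
  have hz1 : 1 < ‖z‖ := ht1.trans_le htz
  have hbound := norm_pow_mul_cubic_le_of_isRoot (by omega) hz hz1
  have hP : t ^ 3 - t ^ 2 - 1 ≤ ‖z‖ ^ 3 - ‖z‖ ^ 2 - 1 :=
    cubic_strictMonoOn.monotoneOn ht1.le (hz1.le : 1 ≤ ‖z‖) htz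
  have hpow : 3 / (t ^ 3 - t ^ 2 - 1) < ‖z‖ ^ (n - 2) :=
    hN.trans_le ((pow_le_pow_right₀ ht1.le (by omega)).trans (pow_le_pow_left₀ (by linarith) htz _))
  rw [div_lt_iff₀ ht] at hpow
  have hsplit : ‖z‖ ^ (n + 1) = ‖z‖ ^ 3 * ‖z‖ ^ (n - 2) := by rw [← pow_add]; congr 1; omega
  rw [hsplit] at hbound
  have hz3 : 0 < ‖z‖ ^ 3 := by positivity
  nlinarith [mul_le_mul_of_nonneg_left hP (by positivity : 0 ≤ ‖z‖ ^ 3 * ‖z‖ ^ (n - 2))]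

lemma eventually_exists_real_isRoot_gt {y : ℝ} (hy1 : 1 < y) (hy : y ^ 3 - y ^ 2 - 1 < 0) :
    ∀ᶠ n in atTop, ∃ x : ℝ, y < x ∧ (coxeterPolyT24 ℂ n).IsRoot x := by
  filter_upwards [eventually_ge_atTop 3, (tendsto_pow_atTop_atTop_of_one_lt hy1).eventually_gt_atTop
    ((y ^ 3 + y - 1) / -(y ^ 3 - y ^ 2 - 1))] with n hn hyn
  let F : ℝ → ℝ := fun x => x ^ (n + 1) * (x ^ 3 - x ^ 2 - 1) + (x ^ 3 + x - 1)
  have hFy : F y < 0 := by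
    rw [div_lt_iff₀ (by linarith)] at hyn
    have := mul_le_mul_of_nonneg_right (pow_le_pow_right₀ hy1.le (n.le_add_right 1))
      (neg_nonneg.2 hy.le)
    show y ^ (n + 1) * (y ^ 3 - y ^ 2 - 1) + (y ^ 3 + y - 1) < 0
    linarith
  have hFy1 : 0 < F (y + 1) := by
    have : 0 < (y + 1) ^ 3 - (y + 1) ^ 2 - 1 := by nlinarith
    have : 0 < (y + 1) ^ 3 + (y + 1) - 1 := by nlinarith
    positivity
  obtain ⟨x, ⟨hyx, -⟩, hx⟩ :=
    intermediate_value_Ioc (by linarith) (by fun_prop : ContinuousOn F (Set.Icc y (y + 1)))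
      ⟨hFy, hFy1.le⟩
  have hx1 : 1 < x := hy1.trans hyx
  refine ⟨x, hyx, (isRoot_coxeterPolyT24_iff hn ?_ ?_).2 (by exact_mod_cast hx)⟩
  · exact_mod_cast hx1.ne'
  · exact_mod_cast (show x ≠ -1 by linarith)

/-- For `n ≥ 4` let
`r_n(X) = X^{n+4} + X^{n+3} − X^{n+1} − 2(X⁴ + ⋯ + Xⁿ) − X³ + X + 1`
(the characteristic polynomial of the Coxeter transformation of `T_{2,4,n}`) and let
`ρ_n` be the maximum of `|z|` over the complex roots of `r_n`. Then `ρ_n` converges, as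
`n → ∞`, to the unique real root `ρ_max` of `λ³ − λ² − 1 = 0`, and
`ρ_max = 1/3 + ∛(58/108 + √(31/108)) + ∛(58/108 − √(31/108))` (≈ 1.465571). -/
theorem stmt_17 (r : ℕ → Polynomial ℂ)
    (hr : ∀ n : ℕ, 4 ≤ n →
      r n = X ^ (n + 4) + X ^ (n + 3) - X ^ (n + 1)
            - 2 * (∑ i ∈ Finset.Icc 4 n, X ^ i) - X ^ 3 + X + 1)
    (rho : ℕ → ℝ)
    (hrho : ∀ n : ℕ, 4 ≤ n →
      (∃ z : ℂ, (r n).IsRoot z ∧ ‖z‖ = rho n) ∧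
      (∀ z : ℂ, (r n).IsRoot z → ‖z‖ ≤ rho n)) :
    ∃ ρmax : ℝ,
      ρmax ^ 3 - ρmax ^ 2 - 1 = 0 ∧
      (∀ s : ℝ, s ^ 3 - s ^ 2 - 1 = 0 → s = ρmax) ∧
      ρmax = 1 / 3 + (58 / 108 + Real.sqrt (31 / 108)) ^ ((1 : ℝ) / 3)
           + (58 / 108 - Real.sqrt (31 / 108)) ^ ((1 : ℝ) / 3) ∧
      Tendsto rho atTop (nhds ρmax) := by
  obtain ⟨ρ, hρ⟩ : ∃ ρ : ℝ, ρ = 1 / 3 + (58 / 108 + Real.sqrt (31 / 108)) ^ ((1 : ℝ) / 3)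
      + (58 / 108 - Real.sqrt (31 / 108)) ^ ((1 : ℝ) / 3) := ⟨_, rfl⟩
  have hρ3 := cubic_eq_zero_of_eq_cardano hρ
  have hρ1 := one_lt_of_cubic_nonneg hρ3.ge
  have hr' (n : ℕ) (hn : 4 ≤ n) : r n = coxeterPolyT24 ℂ n := hr n hn
  refine ⟨ρ, hρ3, fun s hs => ?_, hρ, tendsto_order.2 ⟨fun a ha => ?_, fun b hb => ?_⟩⟩
  · exact cubic_strictMonoOn.injOn (one_lt_of_cubic_nonneg hs.ge).le hρ1.le (hs.trans hρ3.symm)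
  · set y := max a ((1 + ρ) / 2)
    have hy1 : 1 < y := lt_max_of_lt_right (by linarith)
    have hyρ : y < ρ := max_lt ha (by linarith)
    have hPy : y ^ 3 - y ^ 2 - 1 < 0 := hρ3 ▸ cubic_strictMonoOn hy1.le hρ1.le hyρ
    filter_upwards [eventually_exists_real_isRoot_gt hy1 hPy, eventually_ge_atTop 4]
      with n ⟨x, hyx, hx⟩ hn
    calc a ≤ y := le_max_left _ _
      _ < x := hyx
      _ = ‖(x : ℂ)‖ := by rw [Complex.norm_real, Real.norm_of_nonneg (by linarith)]
      _ ≤ rho n := (hrho n hn).2 _ (hr' n hn ▸ hx)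
  · have hPb : 0 < b ^ 3 - b ^ 2 - 1 := hρ3 ▸ cubic_strictMonoOn hρ1.le (hρ1.trans hb).le hb
    filter_upwards [eventually_norm_lt_of_isRoot_s17 hPb, eventually_ge_atTop 4] with n hroots hn
    obtain ⟨z, hz, hzρ⟩ := (hrho n hn).1
    exact hzρ ▸ hroots z (hr' n hn ▸ hz)
end

section
/- Let K(D₄) be the 4×4 Cartan matrix of the Dynkin diagram D₄ (central vertex 0 adjacent to vertices 1, 2, 3), K(D̃₄) the 5×5 Cartan matrix of the extended Dynkin diagram D̃₄ (central vertex 0 adjacent to vertices 1, 2, 3, 4), K(G₂) := [[2, −1],[−3, 2]], and K(G̃₂) := [[2, −1, 0],[−1, 2, −1],[0, −3, 2]], and let 𝒳(Γ) denote the characteristic polynomial of the Coxeter transformation C(K(Γ)). Then 𝒳(D₄)·(X² − 1)² = (X³ + 1)·𝒳(D̃₄) and 𝒳(G₂)·(X² − 1)² = (X³ + 1)·𝒳(G̃₂); consequently 𝒳(D₄)·𝒳(G̃₂) = 𝒳(G₂)·𝒳(D̃₄), i.e., the ratio 𝒳(Γ)/𝒳(Γ̃) is the same for the diagram D₄ and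 for its folded diagram G₂. -/
open Matrix Polynomial

/-- The `i`-th simple reflection matrix of a generalized Cartan matrix `K`:
the identity matrix with its `i`-th row replaced by the row `j ↦ δ_{ij} − K_{ij}`. -/
def simpleRefl {n : ℕ} (K : Matrix (Fin n) (Fin n) ℤ) (i : Fin n) :
    Matrix (Fin n) (Fin n) ℤ :=
  fun a b => if a = i then (if i = b then 1 else 0) - K i b else (if a = b then 1 else 0)

/-- The Coxeter transformation `C(K) = R₁·R₂·⋯·R_n` of a generalized Cartan matrix `K`,
the product of the simple reflections in increasing index order. -/
def coxeterOf {n : ℕ} (K : Matrix (Fin n) (Fin n) ℤ) : Matrix (Fin n) (Fin n) ℤ :=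
  (List.ofFn fun i => simpleRefl K i).prod

/-- The characteristic polynomial `𝒳(Γ) = det(X·I − C(K))` of the Coxeter
transformation of a generalized Cartan matrix `K`. -/
noncomputable def chi {n : ℕ} (K : Matrix (Fin n) (Fin n) ℤ) : Polynomial ℤ :=
  (coxeterOf K).charpoly

/-
The Coxeter transformations are computed explicitly and their characteristic polynomials
expanded along the first row: `𝒳(D₄) = (X + 1)(X³ + 1)`, `𝒳(D̃₄) = (X + 1)(X² − 1)²`,
`𝒳(G₂) = X² − X + 1` and `𝒳(G̃₂) = (X + 1)(X − 1)²`. The last identity is then a formal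
consequence of the first two, cancelling the nonzero factor `(X² − 1)²` in the domain `ℤ[X]`.
-/

theorem cross_mul_eq_of_mul_eq_mul {α : Type*} [CommMonoidWithZero α] [IsCancelMulZero α]
    {a b c d p q : α}
    (hab : a * q = p * b) (hcd : c * q = p * d) (hq : q ≠ 0) : a * d = c * b :=
  mul_right_cancel₀ hq <| calc
    a * d * q = a * q * d := by rw [mul_right_comm]
    _ = p * b * d := by rw [hab]
    _ = p * d * b := by rw [mul_right_comm]
    _ = c * b * q := by rw [← hcd, mul_right_comm]

theorem coxeterOf_D4 : coxeterOf !![2,-1,-1,-1; -1,2,0,0; -1,0,2,0; -1,0,0,2]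
    = !![2,-1,-1,-1; 1,-1,0,0; 1,0,-1,0; 1,0,0,-1] := by
  decide

theorem coxeterOf_D4e :
    coxeterOf !![2,-1,-1,-1,-1; -1,2,0,0,0; -1,0,2,0,0; -1,0,0,2,0; -1,0,0,0,2]
      = !![3,-1,-1,-1,-1; 1,-1,0,0,0; 1,0,-1,0,0; 1,0,0,-1,0; 1,0,0,0,-1] := by
  decide

theorem coxeterOf_G2 : coxeterOf !![2,-1; -3,2] = !![2,-1; 3,-1] := by
  decide

theorem coxeterOf_G2e : coxeterOf !![2,-1,0; -1,2,-1; 0,-3,2] = !![0,2,-1; 1,2,-1; 0,3,-1] := by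
  decide

theorem chi_D4 : chi !![2,-1,-1,-1; -1,2,0,0; -1,0,2,0; -1,0,0,2] = X^4 + X^3 + X + 1 := by
  rw [chi, coxeterOf_D4]
  simp [charpoly, charmatrix, det_succ_row_zero, Fin.sum_univ_succ, Fin.succAbove]
  ring

theorem chi_D4e : chi !![2,-1,-1,-1,-1; -1,2,0,0,0; -1,0,2,0,0; -1,0,0,2,0; -1,0,0,0,2]
    = X^5 + X^4 - 2*X^3 - 2*X^2 + X + 1 := by
  rw [chi, coxeterOf_D4e]
  simp [charpoly, charmatrix, det_succ_row_zero, Fin.sum_univ_succ, Fin.succAbove]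
  ring

theorem chi_G2 : chi !![2,-1; -3,2] = X^2 - X + 1 := by
  rw [chi, coxeterOf_G2]
  simp [charpoly_fin_two, trace_fin_two, det_fin_two]

theorem chi_G2e : chi !![2,-1,0; -1,2,-1; 0,-3,2] = X^3 - X^2 - X + 1 := by
  rw [chi, coxeterOf_G2e]
  simp [charpoly, charmatrix, det_fin_three]
  ring

/-- With `𝒳` the characteristic polynomial of the Coxeter transformation,
for the Cartan matrices of `D₄`, `D̃₄`, `G₂` and `G̃₂` one has
`𝒳(D₄)·(X² − 1)² = (X³ + 1)·𝒳(D̃₄)` and `𝒳(G₂)·(X² − 1)² = (X³ + 1)·𝒳(G̃₂)`;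
consequently `𝒳(D₄)·𝒳(G̃₂) = 𝒳(G₂)·𝒳(D̃₄)`: the ratio `𝒳(Γ)/𝒳(Γ̃)` is the same for
`D₄` and its folded diagram `G₂`. -/
theorem stmt_19
    (KD4 : Matrix (Fin 4) (Fin 4) ℤ)
    (hKD4 : KD4 = !![2,-1,-1,-1; -1,2,0,0; -1,0,2,0; -1,0,0,2])
    (KD4e : Matrix (Fin 5) (Fin 5) ℤ)
    (hKD4e : KD4e = !![2,-1,-1,-1,-1; -1,2,0,0,0; -1,0,2,0,0; -1,0,0,2,0; -1,0,0,0,2])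
    (KG2 : Matrix (Fin 2) (Fin 2) ℤ)
    (hKG2 : KG2 = !![2,-1; -3,2])
    (KG2e : Matrix (Fin 3) (Fin 3) ℤ)
    (hKG2e : KG2e = !![2,-1,0; -1,2,-1; 0,-3,2]) :
    chi KD4 * (X ^ 2 - 1) ^ 2 = (X ^ 3 + 1) * chi KD4e ∧
    chi KG2 * (X ^ 2 - 1) ^ 2 = (X ^ 3 + 1) * chi KG2e ∧
    chi KD4 * chi KG2e = chi KG2 * chi KD4e := by
  have hD4 : chi KD4 * (X ^ 2 - 1) ^ 2 = (X ^ 3 + 1) * chi KD4e := by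
    rw [hKD4, hKD4e, chi_D4, chi_D4e]; ring
  have hG2 : chi KG2 * (X ^ 2 - 1) ^ 2 = (X ^ 3 + 1) * chi KG2e := by
    rw [hKG2, hKG2e, chi_G2, chi_G2e]; ring
  have hq : ((X : ℤ[X]) ^ 2 - 1) ^ 2 ≠ 0 :=
    pow_ne_zero 2 (by simpa using X_pow_sub_C_ne_zero two_pos (1 : ℤ))
  exact ⟨hD4, hG2, cross_mul_eq_of_mul_eq_mul hD4 hG2 hq⟩
end
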